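/- arXiv:1511.03324 — 6 statements merged into one kernel-verified Lean document; each statement's English description precedes it below -/
import Mathlib

section
/- Let s ≥ 2, let y : [2, s] → [0, ∞) be continuously differentiable, let g : [2, s] → [0, ∞) be locally integrable, and let C, ε, σ > 0 be constants such that y(τ) y′(τ) ≤ g(τ) y(τ) + C² ε² τ^{−1−σ} for all τ ∈ [2, s]. Then y(τ) ≤ y(2) + C ε (1 + σ^{−1}) + ∫₂^τ g(η) dη for all τ ∈ [2, s]. -/
/-!
Compare `y` with the barrier `φ τ = y 2 + Cε + ∫₂^τ (g η + Cε η^(-1-σ)) dη`.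
Wherever `y > φ` we have `y > Cε`, so dividing the hypothesis by `y` gives
`y′ ≤ g + Cε τ^(-1-σ) = φ′`. Integrating from the last point where `y ≤ φ` shows
that `y` can never rise above `φ`, and `∫₂^∞ η^(-1-σ) dη ≤ σ⁻¹` turns `y ≤ φ` into the stated bound.
-/

open MeasureTheory Set

theorem exists_last_le_of_lt {f g : ℝ → ℝ} {a b : ℝ} (hf : ContinuousOn f (Icc a b))
    (hg : ContinuousOn g (Icc a b)) (hab : a ≤ b) (ha : f a ≤ g a) (hb : g b < f b) :
    ∃ c ∈ Ico a b, f c ≤ g c ∧ ∀ t ∈ Ioc c b, g t < f t := by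
  set S := {x ∈ Icc a b | f x ≤ g x}
  have hSbdd : BddAbove S := ⟨b, fun x hx => hx.1.2⟩
  have hcS : sSup S ∈ S :=
    (isClosed_Icc.isClosed_le hf hg).csSup_mem ⟨a, ⟨left_mem_Icc.2 hab, ha⟩⟩ hSbdd
  have hlt : sSup S < b := lt_of_le_of_ne hcS.1.2 fun h => hb.not_ge (h ▸ hcS.2)
  refine ⟨sSup S, ⟨hcS.1.1, hlt⟩, hcS.2, fun t ht => ?_⟩
  by_contra! hle
  exact (le_csSup hSbdd ⟨⟨hcS.1.1.trans ht.1.le, ht.2⟩, hle⟩).not_gt ht.1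

theorem le_add_integral_of_deriv_le_of_gt {y y' h : ℝ → ℝ} {a b M : ℝ}
    (hy : ContinuousOn y (Icc a b)) (hy' : ∀ t ∈ Ioo a b, HasDerivWithinAt y (y' t) (Ioi t) t)
    (hh : IntegrableOn h (Icc a b)) (ha : y a ≤ M)
    (hbound : ∀ t ∈ Ioo a b, M + ∫ s in a..t, h s < y t → y' t ≤ h t) :
    ∀ t ∈ Icc a b, y t ≤ M + ∫ s in a..t, h s := by
  intro t ht
  by_contra! hlt
  have hint : ∀ x ∈ Icc a b, IntervalIntegrable h volume a x := fun x hx =>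
    (intervalIntegrable_iff_integrableOn_Icc_of_le hx.1).2
      (hh.mono_set (Icc_subset_Icc_right hx.2))
  have hφ : ContinuousOn (fun x => M + ∫ s in a..x, h s) (Icc a t) := by
    have := intervalIntegral.continuousOn_primitive_interval' (hint t ht) left_mem_uIcc
    exact continuousOn_const.add (uIcc_of_le ht.1 ▸ this)
  obtain ⟨c, hc, hyc, habove⟩ :=
    exists_last_le_of_lt (hy.mono (Icc_subset_Icc_right ht.2)) hφ ht.1 (by simpa using ha) hlt
  have hsub : Icc c t ⊆ Icc a b := Icc_subset_Icc hc.1 ht.2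
  have hsub' : Ioo c t ⊆ Ioo a b := Ioo_subset_Ioo hc.1 ht.2
  have hrise : y t - y c ≤ ∫ s in c..t, h s :=
    intervalIntegral.sub_le_integral_of_hasDeriv_right_of_le hc.2.le (hy.mono hsub)
      (fun x hx => hy' x (hsub' hx)) (hh.mono_set hsub)
      (fun x hx => hbound x (hsub' hx) (habove x (Ioo_subset_Ioc_self hx)))
  rw [← intervalIntegral.integral_interval_sub_left (hint t ht)
    (hint c (hsub (left_mem_Icc.2 hc.2.le)))] at hrise
  linarith

theorem le_add_mul_of_mul_le_add_sq_mul {y y' g K p : ℝ} (hK : 0 ≤ K) (hKy : K < y)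
    (hp : 0 ≤ p) (h : y * y' ≤ g * y + K ^ 2 * p) : y' ≤ g + K * p := by
  have hKp : K * (K * p) ≤ y * (K * p) := mul_le_mul_of_nonneg_right hKy.le (mul_nonneg hK hp)
  refine le_of_mul_le_mul_left ?_ (hK.trans_lt hKy)
  linarith

theorem integral_rpow_neg_one_sub_le {a b σ : ℝ} (ha : 0 < a) (hab : a ≤ b) (hσ : 0 < σ) :
    ∫ x in a..b, x ^ (-1 - σ) ≤ a ^ (-σ) / σ := by
  have h0 : (0 : ℝ) ∉ uIcc a b := by
    rw [uIcc_of_le hab]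
    exact fun h => ha.not_ge h.1
  rw [integral_rpow (Or.inr ⟨by linarith, h0⟩), show -1 - σ + 1 = -σ by ring, div_neg,
    ← neg_div, neg_sub]
  have hb : 0 ≤ b ^ (-σ) := Real.rpow_nonneg (ha.le.trans hab) _
  gcongr
  linarith

theorem nonlinear_gronwall_inequality_general
    (s : ℝ)
    (y y' g : ℝ → ℝ)
    (hy : ∀ τ ∈ Set.Icc (2 : ℝ) s, HasDerivAt y (y' τ) τ)
    (hynn : ∀ τ ∈ Set.Icc (2 : ℝ) s, 0 ≤ y τ)
    (hg : IntegrableOn g (Set.Icc 2 s))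
    (hgnn : ∀ τ ∈ Set.Icc (2 : ℝ) s, 0 ≤ g τ)
    (C ε σ : ℝ) (hC : 0 < C) (hε : 0 < ε) (hσ : 0 < σ)
    (hineq : ∀ τ ∈ Set.Icc (2 : ℝ) s,
      y τ * y' τ ≤ g τ * y τ + C ^ 2 * ε ^ 2 * τ ^ (-1 - σ)) :
    ∀ τ ∈ Set.Icc (2 : ℝ) s,
      y τ ≤ y 2 + C * ε * (1 + σ⁻¹) + ∫ η in (2 : ℝ)..τ, g η := by
  intro τ hτ
  have hK : 0 < C * ε := mul_pos hC hε
  have hpow : ∀ η ∈ Icc (2 : ℝ) s, 0 ≤ η ^ (-1 - σ) := fun η hη =>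
    Real.rpow_nonneg (by linarith [hη.1]) _
  have hpow_int : IntegrableOn (fun η : ℝ => η ^ (-1 - σ)) (Icc 2 s) :=
    ContinuousOn.integrableOn_Icc fun η hη =>
      (Real.continuousAt_rpow_const η _ (Or.inl (by linarith [hη.1]))).continuousWithinAt
  have hint : ∀ f : ℝ → ℝ, IntegrableOn f (Icc 2 s) → IntervalIntegrable f volume 2 τ :=
    fun f hf => (intervalIntegrable_iff_integrableOn_Icc_of_le hτ.1).2
      (hf.mono_set (Icc_subset_Icc_right hτ.2))
  have hy2 : 0 ≤ y 2 := hynn 2 ⟨le_rfl, hτ.1.trans hτ.2⟩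
  have barrier := le_add_integral_of_deriv_le_of_gt (M := y 2 + C * ε)
    (h := fun η => g η + C * ε * η ^ (-1 - σ))
    (fun t ht => (hy t ht).continuousAt.continuousWithinAt)
    (fun t ht => (hy t (Ioo_subset_Icc_self ht)).hasDerivWithinAt)
    (hg.add (hpow_int.const_mul _)) (by linarith) ?_ τ hτ
  · rw [intervalIntegral.integral_add (hint g hg) ((hint _ hpow_int).const_mul _),
      intervalIntegral.integral_const_mul] at barrier
    have hσint : ∫ η in (2 : ℝ)..τ, η ^ (-1 - σ) ≤ σ⁻¹ :=
      (integral_rpow_neg_one_sub_le two_pos hτ.1 hσ).trans <| by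
        rw [inv_eq_one_div]
        gcongr
        exact Real.rpow_le_one_of_one_le_of_nonpos one_le_two (by linarith)
    linarith [mul_le_mul_of_nonneg_left hσint hK.le]
  · intro t ht hlt
    have htmem : t ∈ Icc (2 : ℝ) s := Ioo_subset_Icc_self ht
    have hφ : 0 ≤ ∫ η in (2 : ℝ)..t, (g η + C * ε * η ^ (-1 - σ)) :=
      intervalIntegral.integral_nonneg ht.1.le fun η hη =>
        have hηs : η ∈ Icc (2 : ℝ) s := ⟨hη.1, hη.2.trans ht.2.le⟩
        add_nonneg (hgnn η hηs) (mul_nonneg hK.le (hpow η hηs))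
    refine le_add_mul_of_mul_le_add_sq_mul hK.le (by linarith) (hpow t htmem) ?_
    simpa only [mul_pow] using hineq t htmem

/-- A nonlinear variant of Gronwall's inequality: if `y y′ ≤ g y + C²ε²τ^(−1−σ)` on `[2,s]`,
then `y(τ) ≤ y(2) + Cε(1 + σ⁻¹) + ∫₂^τ g`. -/
theorem nonlinear_gronwall_inequality
    (s : ℝ) (hs : 2 ≤ s)
    (y y' g : ℝ → ℝ)
    (hy : ∀ τ ∈ Set.Icc (2 : ℝ) s, HasDerivAt y (y' τ) τ)
    (hy' : ContinuousOn y' (Set.Icc 2 s))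
    (hynn : ∀ τ ∈ Set.Icc (2 : ℝ) s, 0 ≤ y τ)
    (hg : IntegrableOn g (Set.Icc 2 s))
    (hgnn : ∀ τ ∈ Set.Icc (2 : ℝ) s, 0 ≤ g τ)
    (C ε σ : ℝ) (hC : 0 < C) (hε : 0 < ε) (hσ : 0 < σ)
    (hineq : ∀ τ ∈ Set.Icc (2 : ℝ) s,
      y τ * y' τ ≤ g τ * y τ + C ^ 2 * ε ^ 2 * τ ^ (-1 - σ)) :
    ∀ τ ∈ Set.Icc (2 : ℝ) s,
      y τ ≤ y 2 + C * ε * (1 + σ⁻¹) + ∫ η in (2 : ℝ)..τ, g η :=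
  nonlinear_gronwall_inequality_general s y y' g hy hynn hg hgnn C ε σ hC hε hσ hineq
end

section
/- Let C > 0. There exist constants δ > 0 and C′ > 0, depending only on C, with the following property. Let T ≥ 2, let C₀, C₁, ε > 0 satisfy C₁ε ≤ δ, and let W, K : [2, T] → [0, ∞) be continuous functions such that for all s ∈ [2, T]: W(s) ≤ C (C₀ε + (C₁ε)²) s^{C√(C₁ε)} + C C₁ε ∫₂^s τ^{−1} ( W(τ) + K(τ) ) dτ, and K(s) ≤ C (C₀ε + (C₁ε)²) s^{C√(C₁ε)} + C C₁ε s^{−1/2} ∫₂^s τ^{−1/2} W(τ) dτ + C C₁ε s^{−1/2} ∫₂^s τ^{−1/2} ( ∫₂^τ η^{−1} W(η) dη ) dτ. Then W(s) + K(s) ≤ C′ (C₀ε + (C₁ε)²) s^{C√(C₁ε)} for all s ∈ [2, T]. -/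
noncomputable section

open MeasureTheory Set

lemma aux_integral_le_rpow (a b r B : ℝ) (f : ℝ → ℝ) (h0 : 0 < a) (hab : a ≤ b)
    (hr : -1 < r) (hB : 0 ≤ B)
    (hf : IntervalIntegrable f volume a b)
    (hfB : ∀ τ ∈ Set.Icc a b, f τ ≤ B * τ ^ r) :
    (∫ τ in a..b, f τ) ≤ B * b ^ (r + 1) / (r + 1) := by
  have hr1 : 0 < r + 1 := by linarith
  have hg : IntervalIntegrable (fun τ : ℝ => B * τ ^ r) volume a b := by
    apply ContinuousOn.intervalIntegrable
    rw [Set.uIcc_of_le hab]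
    intro τ hτ
    exact (continuousAt_const.mul
      (Real.continuousAt_rpow_const τ r
        (Or.inl (ne_of_gt (lt_of_lt_of_le h0 hτ.1))))).continuousWithinAt
  have h1 : (∫ τ in a..b, f τ) ≤ ∫ τ in a..b, B * τ ^ r :=
    intervalIntegral.integral_mono_on hab hf hg hfB
  have h2 : (∫ τ in a..b, B * τ ^ r) = B * ((b ^ (r + 1) - a ^ (r + 1)) / (r + 1)) := by
    rw [intervalIntegral.integral_const_mul, integral_rpow (Or.inl hr)]
  have ha1 : 0 ≤ a ^ (r + 1) := Real.rpow_nonneg h0.le _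
  have h3 : B * ((b ^ (r + 1) - a ^ (r + 1)) / (r + 1)) ≤ B * b ^ (r + 1) / (r + 1) := by
    rw [mul_div_assoc]
    gcongr
    linarith
  linarith [h1, h2 ▸ h1]

/-- Coupled system of linear integral inequalities: if `W, K ≥ 0` satisfy the coupled
integral inequalities with small parameter `C₁ε`, then `W + K` grows at most like
`s^(C√(C₁ε))`. -/
theorem coupled_integral_inequalities (C : ℝ) (hC : 0 < C) :
    ∃ δ > (0 : ℝ), ∃ C' > (0 : ℝ),
      ∀ T : ℝ, 2 ≤ T →
      ∀ C₀ C₁ ε : ℝ, 0 < C₀ → 0 < C₁ → 0 < ε → C₁ * ε ≤ δ →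
      ∀ W K : ℝ → ℝ,
        ContinuousOn W (Set.Icc 2 T) → ContinuousOn K (Set.Icc 2 T) →
        (∀ s ∈ Set.Icc (2 : ℝ) T, 0 ≤ W s) → (∀ s ∈ Set.Icc (2 : ℝ) T, 0 ≤ K s) →
        (∀ s ∈ Set.Icc (2 : ℝ) T,
          W s ≤ C * (C₀ * ε + (C₁ * ε) ^ 2) * s ^ (C * Real.sqrt (C₁ * ε))
            + C * (C₁ * ε) * ∫ τ in (2 : ℝ)..s, τ⁻¹ * (W τ + K τ)) →
        (∀ s ∈ Set.Icc (2 : ℝ) T,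
          K s ≤ C * (C₀ * ε + (C₁ * ε) ^ 2) * s ^ (C * Real.sqrt (C₁ * ε))
            + C * (C₁ * ε) * s ^ (-(1 : ℝ) / 2) * (∫ τ in (2 : ℝ)..s, τ ^ (-(1 : ℝ) / 2) * W τ)
            + C * (C₁ * ε) * s ^ (-(1 : ℝ) / 2) *
                ∫ τ in (2 : ℝ)..s, τ ^ (-(1 : ℝ) / 2) * ∫ η in (2 : ℝ)..τ, η⁻¹ * W η) →
        ∀ s ∈ Set.Icc (2 : ℝ) T,
          W s + K s ≤ C' * (C₀ * ε + (C₁ * ε) ^ 2) * s ^ (C * Real.sqrt (C₁ * ε)) := by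
  refine ⟨min (1/(8*C)) (1/144), by positivity, 4*C, by positivity, ?_⟩
  intro T hT C₀ C₁ ε hC₀ hC₁ hε hδ W K hWc hKc hW0 hK0 hWineq hKineq
  set ε₁ := C₁ * ε with hε₁def
  have hε₁ : 0 < ε₁ := mul_pos hC₁ hε
  set μ := C * Real.sqrt ε₁ with hμdef
  have hsq : 0 < Real.sqrt ε₁ := Real.sqrt_pos.mpr hε₁
  have hμ : 0 < μ := mul_pos hC hsq
  have hε₁eq : Real.sqrt ε₁ * Real.sqrt ε₁ = ε₁ := Real.mul_self_sqrt hε₁.le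
  set q := Real.sqrt ε₁ with hqdef
  set A := C * (C₀ * ε + ε₁ ^ 2) with hAdef
  have hA0 : 0 < A := by positivity
  -- smallness
  have hδ1 : ε₁ ≤ 1/(8*C) := le_trans hδ (min_le_left _ _)
  have hδ2 : ε₁ ≤ 1/144 := le_trans hδ (min_le_right _ _)
  have hsqle : Real.sqrt ε₁ ≤ 1/12 := by
    rw [show (1:ℝ)/12 = Real.sqrt (1/144) by
      rw [show (1:ℝ)/144 = (1/12)^2 by norm_num, Real.sqrt_sq (by norm_num)]]
    exact Real.sqrt_le_sqrt hδ2
  have hCε₁ : C * ε₁ ≤ 1/8 := by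
    have h2 : C * (1/(8*C)) = 1/8 := by field_simp
    calc C * ε₁ ≤ C * (1/(8*C)) := by gcongr
      _ = 1/8 := h2
  have hCε₁0 : 0 < C * ε₁ := mul_pos hC hε₁
  have hsmall : 3 * Real.sqrt ε₁ + 2 * (C * ε₁) ≤ 1/2 := by linarith
  -- the sup
  set g : ℝ → ℝ := fun s => (W s + K s) / s ^ μ with hgdef
  have hne : (Set.Icc (2:ℝ) T).Nonempty := ⟨2, le_refl 2, hT⟩
  have hgc : ContinuousOn g (Set.Icc 2 T) := by
    apply (hWc.add hKc).div
    · exact fun s hs => (Real.continuousAt_rpow_const s μ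
        (Or.inl (by linarith [hs.1] : s ≠ 0))).continuousWithinAt
    · intro s hs
      exact ne_of_gt (Real.rpow_pos_of_pos (by linarith [hs.1]) μ)
  set M := sSup (g '' Set.Icc 2 T) with hMdef
  have hbdd : BddAbove (g '' Set.Icc 2 T) :=
    (isCompact_Icc.image_of_continuousOn hgc).bddAbove
  have hMub : ∀ s ∈ Set.Icc (2:ℝ) T, W s + K s ≤ M * s ^ μ := by
    intro s hs
    have hsp : (0:ℝ) < s ^ μ := Real.rpow_pos_of_pos (by linarith [hs.1]) μ
    have h1 : g s ≤ M := le_csSup hbdd ⟨s, hs, rfl⟩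
    rw [hgdef] at h1
    exact (div_le_iff₀ hsp).mp h1
  have hM0 : 0 ≤ M := by
    have h2 : g 2 ≤ M := le_csSup hbdd ⟨2, ⟨le_refl 2, hT⟩, rfl⟩
    have : 0 ≤ g 2 := div_nonneg
      (add_nonneg (hW0 2 ⟨le_refl 2, hT⟩) (hK0 2 ⟨le_refl 2, hT⟩))
      (Real.rpow_nonneg (by norm_num) μ)
    linarith
  -- pointwise bounds
  have hWKpt : ∀ σ ∈ Set.Icc (2:ℝ) T, W σ + K σ ≤ M * σ ^ μ := hMub
  -- bound for the basic integral with W only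
  have hWbd : ∀ b ∈ Set.Icc (2:ℝ) T,
      (∫ η in (2:ℝ)..b, η⁻¹ * W η) ≤ M * b ^ μ / μ := by
    intro b hb
    have key := aux_integral_le_rpow 2 b (μ - 1) M (fun η => η⁻¹ * W η) two_pos hb.1
      (by linarith) hM0 ?_ ?_
    · rw [show μ - 1 + 1 = μ by ring] at key
      exact key
    · apply ContinuousOn.intervalIntegrable
      rw [Set.uIcc_of_le hb.1]
      apply ContinuousOn.mul
      · exact fun τ hτ => (continuousAt_inv₀
          (by linarith [hτ.1] : τ ≠ 0)).continuousWithinAt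
      · exact hWc.mono (Set.Icc_subset_Icc_right hb.2)
    · intro η hη
      have hη0 : (0:ℝ) < η := by linarith [hη.1]
      have hηT : η ∈ Set.Icc (2:ℝ) T := ⟨hη.1, le_trans hη.2 hb.2⟩
      have h1 : W η ≤ M * η ^ μ := by
        have := hMub η hηT
        have := hK0 η hηT
        linarith
      calc η⁻¹ * W η ≤ η⁻¹ * (M * η ^ μ) := by
            apply mul_le_mul_of_nonneg_left h1 (inv_nonneg.mpr hη0.le)
        _ = M * η ^ (μ - 1) := by
            rw [Real.rpow_sub hη0, Real.rpow_one, div_eq_mul_inv]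
            ring
  -- bound for I₁ (W+K)
  have hI₁bd : ∀ b ∈ Set.Icc (2:ℝ) T,
      (∫ τ in (2:ℝ)..b, τ⁻¹ * (W τ + K τ)) ≤ M * b ^ μ / μ := by
    intro b hb
    have key := aux_integral_le_rpow 2 b (μ - 1) M (fun τ => τ⁻¹ * (W τ + K τ)) two_pos hb.1
      (by linarith) hM0 ?_ ?_
    · rw [show μ - 1 + 1 = μ by ring] at key
      exact key
    · apply ContinuousOn.intervalIntegrable
      rw [Set.uIcc_of_le hb.1]
      apply ContinuousOn.mul
      · exact fun τ hτ => (continuousAt_inv₀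
          (by linarith [hτ.1] : τ ≠ 0)).continuousWithinAt
      · exact (hWc.add hKc).mono (Set.Icc_subset_Icc_right hb.2)
    · intro τ hτ
      have hτ0 : (0:ℝ) < τ := by linarith [hτ.1]
      have hτT : τ ∈ Set.Icc (2:ℝ) T := ⟨hτ.1, le_trans hτ.2 hb.2⟩
      calc τ⁻¹ * (W τ + K τ) ≤ τ⁻¹ * (M * τ ^ μ) := by
            apply mul_le_mul_of_nonneg_left (hMub τ hτT) (inv_nonneg.mpr hτ0.le)
        _ = M * τ ^ (μ - 1) := by
            rw [Real.rpow_sub hτ0, Real.rpow_one, div_eq_mul_inv]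
            ring
  -- bound for I₂
  have hI₂bd : ∀ s ∈ Set.Icc (2:ℝ) T,
      (∫ τ in (2:ℝ)..s, τ ^ (-(1:ℝ)/2) * W τ) ≤ 2 * M * s ^ (μ + 1/2) := by
    intro s hs
    have key := aux_integral_le_rpow 2 s (μ - 1/2) M (fun τ => τ ^ (-(1:ℝ)/2) * W τ)
      two_pos hs.1 (by linarith) hM0 ?_ ?_
    · rw [show μ - 1/2 + 1 = μ + 1/2 by ring] at key
      have hsp : (0:ℝ) ≤ s ^ (μ + 1/2) := Real.rpow_nonneg (by linarith [hs.1]) _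
      have hnum : 0 ≤ M * s ^ (μ + 1/2) := mul_nonneg hM0 hsp
      have h2 : M * s ^ (μ + 1/2) / (μ + 1/2) ≤ M * s ^ (μ + 1/2) / (1/2) := by
        gcongr <;> linarith
      calc (∫ τ in (2:ℝ)..s, τ ^ (-(1:ℝ)/2) * W τ) ≤ M * s ^ (μ + 1/2) / (μ + 1/2) := key
        _ ≤ M * s ^ (μ + 1/2) / (1/2) := h2
        _ = 2 * M * s ^ (μ + 1/2) := by ring
    · apply ContinuousOn.intervalIntegrable
      rw [Set.uIcc_of_le hs.1]
      apply ContinuousOn.mul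
      · exact fun τ hτ => (Real.continuousAt_rpow_const τ _
          (Or.inl (by linarith [hτ.1] : τ ≠ 0))).continuousWithinAt
      · exact hWc.mono (Set.Icc_subset_Icc_right hs.2)
    · intro τ hτ
      have hτ0 : (0:ℝ) < τ := by linarith [hτ.1]
      have hτT : τ ∈ Set.Icc (2:ℝ) T := ⟨hτ.1, le_trans hτ.2 hs.2⟩
      have h1 : W τ ≤ M * τ ^ μ := by
        have := hMub τ hτT
        have := hK0 τ hτT
        linarith
      calc τ ^ (-(1:ℝ)/2) * W τ ≤ τ ^ (-(1:ℝ)/2) * (M * τ ^ μ) := by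
            apply mul_le_mul_of_nonneg_left h1 (Real.rpow_nonneg hτ0.le _)
        _ = M * τ ^ (μ - 1/2) := by
            rw [show μ - 1/2 = μ + (-(1:ℝ)/2) by ring, Real.rpow_add hτ0]
            ring
  -- bound for I₃
  have hI₃bd : ∀ s ∈ Set.Icc (2:ℝ) T,
      (∫ τ in (2:ℝ)..s, τ ^ (-(1:ℝ)/2) * ∫ η in (2:ℝ)..τ, η⁻¹ * W η)
        ≤ 2 * (M / μ) * s ^ (μ + 1/2) := by
    intro s hs
    have hPint : IntegrableOn (fun η : ℝ => η⁻¹ * W η) (Set.uIcc 2 s) volume := by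
      rw [Set.uIcc_of_le hs.1]
      apply ContinuousOn.integrableOn_compact isCompact_Icc
      apply ContinuousOn.mul
      · exact fun τ hτ => (continuousAt_inv₀
          (by linarith [hτ.1] : τ ≠ 0)).continuousWithinAt
      · exact hWc.mono (Set.Icc_subset_Icc_right hs.2)
    have hPc : ContinuousOn (fun τ => ∫ η in (2:ℝ)..τ, η⁻¹ * W η) (Set.Icc 2 s) := by
      have := intervalIntegral.continuousOn_primitive_interval hPint
      rwa [Set.uIcc_of_le hs.1] at this
    have hMμ0 : 0 ≤ M / μ := div_nonneg hM0 hμ.le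
    have key := aux_integral_le_rpow 2 s (μ - 1/2) (M / μ)
      (fun τ => τ ^ (-(1:ℝ)/2) * ∫ η in (2:ℝ)..τ, η⁻¹ * W η)
      two_pos hs.1 (by linarith) hMμ0 ?_ ?_
    · rw [show μ - 1/2 + 1 = μ + 1/2 by ring] at key
      have hsp : (0:ℝ) ≤ s ^ (μ + 1/2) := Real.rpow_nonneg (by linarith [hs.1]) _
      have hnum : 0 ≤ M / μ * s ^ (μ + 1/2) := mul_nonneg hMμ0 hsp
      have h2 : M / μ * s ^ (μ + 1/2) / (μ + 1/2) ≤ M / μ * s ^ (μ + 1/2) / (1/2) := by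
        gcongr <;> linarith
      calc (∫ τ in (2:ℝ)..s, τ ^ (-(1:ℝ)/2) * ∫ η in (2:ℝ)..τ, η⁻¹ * W η)
          ≤ M / μ * s ^ (μ + 1/2) / (μ + 1/2) := key
        _ ≤ M / μ * s ^ (μ + 1/2) / (1/2) := h2
        _ = 2 * (M / μ) * s ^ (μ + 1/2) := by ring
    · apply ContinuousOn.intervalIntegrable
      rw [Set.uIcc_of_le hs.1]
      apply ContinuousOn.mul
      · exact fun τ hτ => (Real.continuousAt_rpow_const τ _
          (Or.inl (by linarith [hτ.1] : τ ≠ 0))).continuousWithinAt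
      · exact hPc
    · intro τ hτ
      have hτ0 : (0:ℝ) < τ := by linarith [hτ.1]
      have hτT : τ ∈ Set.Icc (2:ℝ) T := ⟨hτ.1, le_trans hτ.2 hs.2⟩
      have h1 : (∫ η in (2:ℝ)..τ, η⁻¹ * W η) ≤ M * τ ^ μ / μ := hWbd τ hτT
      calc τ ^ (-(1:ℝ)/2) * (∫ η in (2:ℝ)..τ, η⁻¹ * W η)
          ≤ τ ^ (-(1:ℝ)/2) * (M * τ ^ μ / μ) := by
            apply mul_le_mul_of_nonneg_left h1 (Real.rpow_nonneg hτ0.le _)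
        _ = M / μ * τ ^ (μ - 1/2) := by
            rw [show μ - 1/2 = μ + (-(1:ℝ)/2) by ring, Real.rpow_add hτ0]
            ring
  -- key estimate
  have hkey : ∀ s ∈ Set.Icc (2:ℝ) T, W s + K s ≤ (2 * A + M / 2) * s ^ μ := by
    intro s hs
    have hs0 : (0:ℝ) < s := by linarith [hs.1]
    have hsp : (0:ℝ) < s ^ μ := Real.rpow_pos_of_pos hs0 μ
    have hsneg : (0:ℝ) ≤ s ^ (-(1:ℝ)/2) := Real.rpow_nonneg hs0.le _
    have hspow : s ^ (-(1:ℝ)/2) * s ^ (μ + 1/2) = s ^ μ := by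
      rw [← Real.rpow_add hs0, show -(1:ℝ)/2 + (μ + 1/2) = μ by ring]
    -- W bound
    have hWs : W s ≤ A * s ^ μ + q * (M * s ^ μ) := by
      have h1 := hWineq s hs
      have h2 : C * ε₁ * (∫ τ in (2:ℝ)..s, τ⁻¹ * (W τ + K τ))
          ≤ C * ε₁ * (M * s ^ μ / μ) :=
        mul_le_mul_of_nonneg_left (hI₁bd s hs) hCε₁0.le
      have h3 : C * ε₁ * (M * s ^ μ / μ) = q * (M * s ^ μ) := by
        rw [hμdef, ← hε₁eq]
        field_simp
      linarith [h1, h3 ▸ h2]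
    -- K bound
    have hKs : K s ≤ A * s ^ μ + 2 * (C * ε₁) * (M * s ^ μ)
        + 2 * q * (M * s ^ μ) := by
      have h1 := hKineq s hs
      have h2 : C * ε₁ * s ^ (-(1:ℝ)/2) * (∫ τ in (2:ℝ)..s, τ ^ (-(1:ℝ)/2) * W τ)
          ≤ C * ε₁ * s ^ (-(1:ℝ)/2) * (2 * M * s ^ (μ + 1/2)) :=
        mul_le_mul_of_nonneg_left (hI₂bd s hs)
          (by positivity)
      have h2' : C * ε₁ * s ^ (-(1:ℝ)/2) * (2 * M * s ^ (μ + 1/2))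
          = 2 * (C * ε₁) * (M * s ^ μ) := by
        rw [← hspow]; ring
      have h3 : C * ε₁ * s ^ (-(1:ℝ)/2) *
            (∫ τ in (2:ℝ)..s, τ ^ (-(1:ℝ)/2) * ∫ η in (2:ℝ)..τ, η⁻¹ * W η)
          ≤ C * ε₁ * s ^ (-(1:ℝ)/2) * (2 * (M / μ) * s ^ (μ + 1/2)) :=
        mul_le_mul_of_nonneg_left (hI₃bd s hs) (by positivity)
      have h3' : C * ε₁ * s ^ (-(1:ℝ)/2) * (2 * (M / μ) * s ^ (μ + 1/2))
          = 2 * q * (M * s ^ μ) := by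
        rw [← hspow, hμdef, ← hε₁eq]
        field_simp
      linarith [h1, h2' ▸ h2, h3' ▸ h3]
    have hMs : 0 ≤ M * s ^ μ := mul_nonneg hM0 hsp.le
    have hcoef : (3 * q + 2 * (C * ε₁)) * (M * s ^ μ) ≤ 1/2 * (M * s ^ μ) :=
      mul_le_mul_of_nonneg_right hsmall hMs
    linarith only [hWs, hKs, hcoef]
  -- conclude M ≤ 4A
  have hMle : M ≤ 2 * A + M / 2 := by
    apply csSup_le (hne.image g)
    rintro y ⟨s, hs, rfl⟩
    have hsp : (0:ℝ) < s ^ μ := Real.rpow_pos_of_pos (by linarith [hs.1]) μ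
    exact (div_le_iff₀ hsp).mpr (hkey s hs)
  have hM4 : M ≤ 4 * A := by linarith
  intro s hs
  have hsp : (0:ℝ) < s ^ μ := Real.rpow_pos_of_pos (by linarith [hs.1]) μ
  calc W s + K s ≤ M * s ^ μ := hMub s hs
    _ ≤ 4 * A * s ^ μ := mul_le_mul_of_nonneg_right hM4 hsp.le
    _ = 4 * C * (C₀ * ε + ε₁ ^ 2) * s ^ μ := by rw [hAdef]; ring
end
end

section
/- Let c > 0. There exists a constant C > 0, depending only on c, with the following property. Let s₀ ≤ s₁, let G : [s₀, s₁] → ℝ be continuously differentiable with sup |G| ≤ 1/3, let k : [s₀, s₁] → ℝ be integrable, and let z : [s₀, s₁] → ℝ be continuously differentiable with z′ locally absolutely continuous, satisfying z″(λ) + ( c² / (1 + G(λ)) ) z(λ) = k(λ) for almost every λ ∈ [s₀, s₁], with z(s₀) = z₀ and z′(s₀) = z₁. Then, setting K(s) = ∫_{s₀}^{s} |k(τ)| dτ, for every s ∈ [s₀, s₁]: |z(s)| + |z′(s)| ≤ C ( |z₀| + |z₁| + K(s) ) + C ∫_{s₀}^{s} ( |z₀| + |z₁| + K(τ) ) |G′(τ)|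 exp( C ∫_{τ}^{s} |G′(λ)| dλ ) dτ. -/
/-!
Along a solution, the energy `E = ω z² + z'²` with `ω = c² / (1 + G)` satisfies
`E' = ω' z² + 2 z' k`, and `|ω'| ≤ (3/2) |G'| ω`, so `E' ≤ (3/2) |G'| E + 2 |k| √E`. Since `z'` is
only absolutely continuous, this is used in integrated form, and `√E` is never differentiated: at a
point where `√E` is maximal on `[s₀, t]` the integrated inequality becomes a quadratic inequality,
which gives `√E t ≤ √E s₀ + 2 ∫ |k| + ∫ (3/2) |G'| √E`. Gronwall's inequality in integral form
bounds `√E`, and `(c/2)² ≤ ω ≤ (2c)²` makes `|z| + |z'|` and `√E` comparable.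
-/

open MeasureTheory Set Real

lemma hasDerivAt_integral_of_continuousOn {f : ℝ → ℝ} {a b c t : ℝ}
    (hf : ContinuousOn f (Icc a b)) (hc : c ∈ Icc a b) (ht : t ∈ Ioo a b) :
    HasDerivAt (fun x => ∫ τ in c..x, f τ) (f t) t :=
  intervalIntegral.integral_hasDerivAt_right
    (hf.mono (uIcc_subset_Icc hc (Ioo_subset_Icc_self ht))).intervalIntegrable
    (hf.mono Ioo_subset_Icc_self |>.stronglyMeasurableAtFilter isOpen_Ioo t ht)
    (hf.continuousAt (Icc_mem_nhds ht.1 ht.2))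

lemma hasDerivAt_integral_left_of_continuousOn {f : ℝ → ℝ} {a b c t : ℝ}
    (hf : ContinuousOn f (Icc a b)) (hc : c ∈ Icc a b) (ht : t ∈ Ioo a b) :
    HasDerivAt (fun x => ∫ τ in x..c, f τ) (-f t) t :=
  intervalIntegral.integral_hasDerivAt_left
    (hf.mono (uIcc_subset_Icc (Ioo_subset_Icc_self ht) hc)).intervalIntegrable
    (hf.mono Ioo_subset_Icc_self |>.stronglyMeasurableAtFilter isOpen_Ioo t ht)
    (hf.continuousAt (Icc_mem_nhds ht.1 ht.2))

lemma continuousOn_integral_left_of_continuousOn {f : ℝ → ℝ} {a b : ℝ} (hab : a ≤ b)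
    (hf : ContinuousOn f (Icc a b)) : ContinuousOn (fun x => ∫ τ in x..b, f τ) (Icc a b) := by
  simpa only [uIcc_of_le hab] using intervalIntegral.continuousOn_primitive_interval_left
    (hf.integrableOn_Icc.mono_set (uIcc_of_le hab).subset)

lemma continuousOn_integral_of_integrableOn {f : ℝ → ℝ} {a b : ℝ} (hab : a ≤ b)
    (hf : IntegrableOn f (Icc a b)) : ContinuousOn (fun x => ∫ τ in a..x, f τ) (Icc a b) := by
  simpa only [uIcc_of_le hab] using
    intervalIntegral.continuousOn_primitive_interval (hf.mono_set (uIcc_of_le hab).subset)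

theorem le_add_integral_mul_exp_of_le_add_integral {a b : ℝ} {u B g : ℝ → ℝ}
    (hu : ContinuousOn u (Icc a b)) (hB : IntegrableOn B (Icc a b))
    (hg : ContinuousOn g (Icc a b)) (hg₀ : ∀ t ∈ Icc a b, 0 ≤ g t)
    (h : ∀ t ∈ Icc a b, u t ≤ B t + ∫ τ in a..t, g τ * u τ) {t : ℝ} (ht : t ∈ Icc a b) :
    u t ≤ B t + ∫ τ in a..t, g τ * B τ * exp (∫ r in τ..t, g r) := by
  have hsub : Icc a t ⊆ Icc a b := Icc_subset_Icc_right ht.2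
  set V : ℝ → ℝ := fun x => ∫ τ in a..x, g τ * u τ
  set X : ℝ → ℝ := fun x => ∫ r in x..t, g r
  have hgu : ContinuousOn (fun x => g x * u x) (Icc a t) := (hg.mul hu).mono hsub
  have hX : ContinuousOn X (Icc a t) :=
    continuousOn_integral_left_of_continuousOn ht.1 (hg.mono hsub)
  have hderiv : ∀ x ∈ Ioo a t, HasDerivAt (fun x => V x * exp (X x))
      (g x * (u x - V x) * exp (X x)) x := fun x hx =>
    ((hasDerivAt_integral_of_continuousOn hgu (left_mem_Icc.2 ht.1) hx).mul
      (hasDerivAt_integral_left_of_continuousOn (hg.mono hsub) (right_mem_Icc.2 ht.1)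
        hx).exp).congr_deriv (by ring)
  have hW : V t * exp (X t) - V a * exp (X a) ≤ ∫ x in a..t, g x * B x * exp (X x) :=
    intervalIntegral.sub_le_integral_of_hasDeriv_right_of_le ht.1
      ((continuousOn_integral_of_integrableOn ht.1 hgu.integrableOn_Icc).mul
        (continuous_exp.comp_continuousOn hX))
      (fun x hx => (hderiv x hx).hasDerivWithinAt)
      (((hB.mono_set hsub).continuousOn_mul (hg.mono hsub) isCompact_Icc).mul_continuousOn
        (continuous_exp.comp_continuousOn hX) isCompact_Icc)
      fun x hx => by
        have hx' : x ∈ Icc a b := hsub (Ioo_subset_Icc_self hx)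
        exact mul_le_mul_of_nonneg_right
          (mul_le_mul_of_nonneg_left (by linarith [h x hx']) (hg₀ x hx')) (exp_pos _).le
  simp only [V, X, intervalIntegral.integral_same, exp_zero, mul_one, zero_mul, sub_zero] at hW
  linarith [h t ht]

lemma integral_mul_exp_mul_integral_mono {a b μ ν : ℝ} {f h : ℝ → ℝ} (hab : a ≤ b)
    (hμν : μ ≤ ν) (hf : ContinuousOn f (Icc a b)) (hf₀ : ∀ t ∈ Icc a b, 0 ≤ f t)
    (hh : ContinuousOn h (Icc a b)) (hh₀ : ∀ t ∈ Icc a b, 0 ≤ h t) :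
    ∫ τ in a..b, f τ * h τ * exp (μ * ∫ r in τ..b, h r)
      ≤ ∫ τ in a..b, f τ * h τ * exp (ν * ∫ r in τ..b, h r) := by
  have hint : ∀ κ, IntervalIntegrable (fun τ => f τ * h τ * exp (κ * ∫ r in τ..b, h r))
      volume a b := fun κ =>
    ((hf.mul hh).mul (continuous_exp.comp_continuousOn (continuousOn_const.mul
      (continuousOn_integral_left_of_continuousOn hab hh)))).intervalIntegrable_of_Icc hab
  refine intervalIntegral.integral_mono_on hab (hint μ) (hint ν) fun τ hτ => ?_
  have : 0 ≤ ∫ r in τ..b, h r :=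
    intervalIntegral.integral_nonneg hτ.2 fun r hr => hh₀ r ⟨hτ.1.trans hr.1, hr.2⟩
  have := mul_nonneg (hf₀ τ hτ) (hh₀ τ hτ)
  gcongr

lemma sq_sub_sq_eq_integral_of_eq_add_integral {f f' : ℝ → ℝ} {a b : ℝ}
    (hf' : IntervalIntegrable f' volume a b)
    (hf : ∀ t ∈ uIcc a b, f t = f a + ∫ τ in a..t, f' τ) :
    f b ^ 2 - f a ^ 2 = ∫ t in a..b, 2 * f' t * f t := by
  set F : ℝ → ℝ := fun t => f a + ∫ τ in a..t, f' τ
  have hF : AbsolutelyContinuousOnInterval F a b :=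
    (LipschitzWith.const (f a)).lipschitzOnWith.absolutelyContinuousOnInterval.add
      (hf'.absolutelyContinuousOnInterval_intervalIntegral left_mem_uIcc)
  have hderiv : ∀ᵐ t, t ∈ uIoc a b → deriv F t = f' t := by
    filter_upwards [hf'.ae_hasDerivAt_integral] with t ht htab
    exact ((ht (uIoc_subset_uIcc htab) a left_mem_uIcc).const_add (f a)).deriv
  have hFf : ∀ t ∈ uIcc a b, F t = f t := fun t ht => (hf t ht).symm
  calc f b ^ 2 - f a ^ 2 = F b * F b - F a * F a := by
        rw [hFf a left_mem_uIcc, hFf b right_mem_uIcc]; ring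
    _ = ∫ t in a..b, deriv F t * F t + F t * deriv F t := (hF.integral_deriv_mul_eq_sub hF).symm
    _ = ∫ t in a..b, 2 * f' t * f t := by
        refine intervalIntegral.integral_congr_ae ?_
        filter_upwards [hderiv] with t ht htab
        rw [ht htab, hFf t (uIoc_subset_uIcc htab)]; ring

theorem le_add_integral_of_sq_le_sq_add_integral {a b : ℝ} {u φ : ℝ → ℝ}
    (hu : ContinuousOn u (Icc a b)) (hu₀ : ∀ t ∈ Icc a b, 0 ≤ u t)
    (hφ : IntegrableOn φ (Icc a b)) (hφ₀ : ∀ t ∈ Icc a b, 0 ≤ φ t)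
    (h : ∀ t ∈ Icc a b, u t ^ 2 ≤ u a ^ 2 + ∫ τ in a..t, φ τ * u τ)
    {t : ℝ} (ht : t ∈ Icc a b) :
    u t ≤ u a + ∫ τ in a..t, φ τ := by
  have ha : a ∈ Icc a b := left_mem_Icc.2 (ht.1.trans ht.2)
  obtain ⟨t₀, ht₀, hmax⟩ :=
    isCompact_Icc.exists_isMaxOn (nonempty_Icc.2 ht.1) (hu.mono (Icc_subset_Icc_right ht.2))
  have ht₀' : t₀ ∈ Icc a b := Icc_subset_Icc_right ht.2 ht₀
  have hφu : ∫ τ in a..t₀, φ τ * u τ ≤ ∫ τ in a..t₀, u t₀ * φ τ :=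
    intervalIntegral.integral_mono_on ht₀.1
      ((hφ.mul_continuousOn hu isCompact_Icc).mono_set (uIcc_subset_Icc ha ht₀')).intervalIntegrable
      ((IntegrableOn.mono_set (hφ.const_mul _) (uIcc_subset_Icc ha ht₀')).intervalIntegrable)
      fun τ hτ => by
        rw [mul_comm]
        exact mul_le_mul_of_nonneg_right (hmax ⟨hτ.1, hτ.2.trans ht₀.2⟩)
          (hφ₀ τ ⟨hτ.1, hτ.2.trans ht₀'.2⟩)
  have hφ_mono : ∫ τ in a..t₀, φ τ ≤ ∫ τ in a..t, φ τ :=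
    intervalIntegral.integral_mono_interval le_rfl ht₀.1 ht₀.2
      ((ae_restrict_iff' measurableSet_Ioc).2
        (.of_forall fun τ hτ => hφ₀ τ ⟨hτ.1.le, hτ.2.trans ht.2⟩))
      (hφ.mono_set (uIcc_subset_Icc ha ht)).intervalIntegrable
  rw [intervalIntegral.integral_const_mul] at hφu
  have hW : 0 ≤ ∫ τ in a..t, φ τ :=
    intervalIntegral.integral_nonneg ht.1 fun τ hτ => hφ₀ τ ⟨hτ.1, hτ.2.trans ht.2⟩
  have hat : u a ≤ u t₀ := hmax (left_mem_Icc.2 ht.1)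
  have htt : u t ≤ u t₀ := hmax (right_mem_Icc.2 ht.1)
  -- `u t₀ ^ 2 ≤ u a ^ 2 + u t₀ * ∫ φ` together with `u a ≤ u t₀` forces `u t₀ ≤ u a + ∫ φ`.
  nlinarith [h t₀ ht₀', hu₀ a ha, hu₀ t₀ ht₀', mul_le_mul_of_nonneg_left hφ_mono (hu₀ t₀ ht₀')]

lemma mul_sq_add_two_mul_le {ω ω' g x y k : ℝ} (hω : 0 ≤ ω) (hg : 0 ≤ g) (hω' : |ω'| ≤ g * ω) :
    ω' * x ^ 2 + 2 * y * k ≤ (g * √(ω * x ^ 2 + y ^ 2) + 2 * |k|) * √(ω * x ^ 2 + y ^ 2) := by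
  have hE : 0 ≤ ω * x ^ 2 + y ^ 2 := by positivity
  have hy : |y| ≤ √(ω * x ^ 2 + y ^ 2) := abs_le_sqrt (by nlinarith [sq_nonneg x])
  have hyk : y * k ≤ √(ω * x ^ 2 + y ^ 2) * |k| :=
    (le_abs_self _).trans ((abs_mul y k).trans_le (mul_le_mul_of_nonneg_right hy (abs_nonneg k)))
  have hω'x : ω' * x ^ 2 ≤ g * (ω * x ^ 2 + y ^ 2) := by
    nlinarith [le_abs_self ω', sq_nonneg x, sq_nonneg y, mul_nonneg hg (sq_nonneg y)]
  nlinarith [mul_self_sqrt hE]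

lemma abs_add_abs_le_mul_sqrt {ω m x y : ℝ} (hm : 0 < m) (hmω : m ^ 2 ≤ ω) :
    |x| + |y| ≤ (1 + m⁻¹) * √(ω * x ^ 2 + y ^ 2) := by
  have hy : |y| ≤ √(ω * x ^ 2 + y ^ 2) := abs_le_sqrt (by nlinarith [sq_nonneg x, sq_nonneg m])
  have hx : m * |x| ≤ √(ω * x ^ 2 + y ^ 2) := by
    rw [← abs_of_pos hm, ← abs_mul]
    exact abs_le_sqrt (by nlinarith [sq_nonneg x, sq_nonneg y])
  have hx' : |x| ≤ m⁻¹ * √(ω * x ^ 2 + y ^ 2) := by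
    rw [inv_mul_eq_div, le_div_iff₀ hm]; linarith
  linarith

lemma sqrt_mul_sq_add_sq_le {ω M x y : ℝ} (hM : 0 ≤ M) (hωM : ω ≤ M ^ 2) :
    √(ω * x ^ 2 + y ^ 2) ≤ M * |x| + |y| :=
  (sqrt_le_left (by positivity)).2 (by
    nlinarith [sq_abs x, sq_abs y, mul_nonneg (mul_nonneg hM (abs_nonneg x)) (abs_nonneg y),
      mul_le_mul_of_nonneg_right hωM (sq_nonneg x)])

section Oscillator

variable {a b : ℝ} {ω ω' z z' z'' k : ℝ → ℝ}

theorem energy_eq_add_integral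
    (hω : ∀ t ∈ Icc a b, HasDerivAt ω (ω' t) t) (hω' : ContinuousOn ω' (Icc a b))
    (hz : ∀ t ∈ Icc a b, HasDerivAt z (z' t) t) (hz' : ContinuousOn z' (Icc a b))
    (hz'' : IntegrableOn z'' (Icc a b)) (hrep : ∀ t ∈ Icc a b, z' t = z' a + ∫ τ in a..t, z'' τ)
    (hode : ∀ᵐ t ∂volume.restrict (Icc a b), z'' t + ω t * z t = k t)
    {t : ℝ} (ht : t ∈ Icc a b) :
    ω t * z t ^ 2 + z' t ^ 2
      = ω a * z a ^ 2 + z' a ^ 2 + ∫ τ in a..t, (ω' τ * z τ ^ 2 + 2 * z' τ * k τ) := by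
  have hsub : uIcc a t ⊆ Icc a b := uIcc_subset_Icc (left_mem_Icc.2 (ht.1.trans ht.2)) ht
  have hωz : ∀ τ ∈ uIcc a t, HasDerivAt (fun x => ω x * z x ^ 2)
      (ω' τ * z τ ^ 2 + ω τ * (2 * z τ * z' τ)) τ := fun τ hτ =>
    ((hω τ (hsub hτ)).mul ((hz τ (hsub hτ)).fun_pow 2)).congr_deriv (by ring)
  have hzc := HasDerivAt.continuousOn hz
  have hint₁ : IntervalIntegrable (fun τ => ω' τ * z τ ^ 2 + ω τ * (2 * z τ * z' τ)) volume a t :=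
    (((hω'.mul (hzc.pow 2)).add ((HasDerivAt.continuousOn hω).mul
      ((continuousOn_const.mul hzc).mul hz'))).mono hsub).intervalIntegrable
  have hint₂ : IntervalIntegrable (fun τ => 2 * z'' τ * z' τ) volume a t :=
    ((IntegrableOn.mul_continuousOn (hz''.const_mul 2) hz' isCompact_Icc).mono_set
      hsub).intervalIntegrable
  have hkin := sq_sub_sq_eq_integral_of_eq_add_integral (hz''.mono_set hsub).intervalIntegrable
    (fun τ hτ => hrep τ (hsub hτ))
  have hode' : ∫ τ in a..t, (ω' τ * z τ ^ 2 + 2 * z' τ * k τ)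
      = ∫ τ in a..t, ((ω' τ * z τ ^ 2 + ω τ * (2 * z τ * z' τ)) + 2 * z'' τ * z' τ) := by
    refine intervalIntegral.integral_congr_ae ?_
    filter_upwards [(ae_restrict_iff' measurableSet_Icc).1 hode] with τ hτ hτt
    linear_combination (-2 * z' τ) * hτ (hsub (uIoc_subset_uIcc hτt))
  rw [hode', intervalIntegral.integral_add hint₁ hint₂,
    intervalIntegral.integral_eq_sub_of_hasDerivAt hωz hint₁, ← hkin]
  ring

theorem sqrt_energy_le_add_integral {g : ℝ → ℝ}
    (hω : ∀ t ∈ Icc a b, HasDerivAt ω (ω' t) t) (hω' : ContinuousOn ω' (Icc a b))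
    (hω₀ : ∀ t ∈ Icc a b, 0 ≤ ω t) (hg : ContinuousOn g (Icc a b)) (hg₀ : ∀ t ∈ Icc a b, 0 ≤ g t)
    (hωg : ∀ t ∈ Icc a b, |ω' t| ≤ g t * ω t) (hk : IntegrableOn k (Icc a b))
    (hz : ∀ t ∈ Icc a b, HasDerivAt z (z' t) t) (hz' : ContinuousOn z' (Icc a b))
    (hz'' : IntegrableOn z'' (Icc a b)) (hrep : ∀ t ∈ Icc a b, z' t = z' a + ∫ τ in a..t, z'' τ)
    (hode : ∀ᵐ t ∂volume.restrict (Icc a b), z'' t + ω t * z t = k t)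
    {t : ℝ} (ht : t ∈ Icc a b) :
    √(ω t * z t ^ 2 + z' t ^ 2) ≤ √(ω a * z a ^ 2 + z' a ^ 2) + 2 * (∫ τ in a..t, |k τ|)
      + ∫ τ in a..t, g τ * √(ω τ * z τ ^ 2 + z' τ ^ 2) := by
  set u : ℝ → ℝ := fun t => √(ω t * z t ^ 2 + z' t ^ 2)
  have ha : a ∈ Icc a b := left_mem_Icc.2 (ht.1.trans ht.2)
  have hzc := HasDerivAt.continuousOn hz
  have hu : ContinuousOn u (Icc a b) :=
    ((HasDerivAt.continuousOn hω).mul (hzc.pow 2)).add (hz'.pow 2) |>.sqrt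
  have hgu : IntegrableOn (fun τ => g τ * u τ) (Icc a b) := (hg.mul hu).integrableOn_Icc
  have hφ : IntegrableOn (fun τ => g τ * u τ + 2 * |k τ|) (Icc a b) :=
    hgu.add (hk.abs.const_mul 2)
  have hrate : IntegrableOn (fun τ => ω' τ * z τ ^ 2 + 2 * z' τ * k τ) (Icc a b) :=
    (hω'.mul (hzc.pow 2)).integrableOn_Icc.add
      (IntegrableOn.continuousOn_mul (continuousOn_const.mul hz') hk isCompact_Icc)
  have hsq : ∀ t ∈ Icc a b, u t ^ 2 ≤ u a ^ 2 + ∫ τ in a..t, (g τ * u τ + 2 * |k τ|) * u τ := by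
    intro t ht
    have hsub : uIcc a t ⊆ Icc a b := uIcc_subset_Icc ha ht
    have hE : ∀ x ∈ Icc a b, u x ^ 2 = ω x * z x ^ 2 + z' x ^ 2 := fun x hx =>
      sq_sqrt (add_nonneg (mul_nonneg (hω₀ x hx) (sq_nonneg _)) (sq_nonneg _))
    rw [hE t ht, hE a ha, energy_eq_add_integral hω hω' hz hz' hz'' hrep hode ht,
      add_le_add_iff_left]
    exact intervalIntegral.integral_mono_on ht.1 (hrate.mono_set hsub).intervalIntegrable
      ((hφ.mul_continuousOn hu isCompact_Icc).mono_set hsub).intervalIntegrable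
      fun τ hτ => mul_sq_add_two_mul_le (hω₀ τ (hsub (Icc_subset_uIcc hτ)))
        (hg₀ τ (hsub (Icc_subset_uIcc hτ))) (hωg τ (hsub (Icc_subset_uIcc hτ)))
  have hsplit : ∫ τ in a..t, (g τ * u τ + 2 * |k τ|)
      = (∫ τ in a..t, g τ * u τ) + 2 * ∫ τ in a..t, |k τ| := by
    rw [intervalIntegral.integral_add (hgu.mono_set (uIcc_subset_Icc ha ht)).intervalIntegrable
      ((IntegrableOn.mono_set hk.abs (uIcc_subset_Icc ha ht)).intervalIntegrable.const_mul 2),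
      intervalIntegral.integral_const_mul]
  have key := le_add_integral_of_sq_le_sq_add_integral hu (fun _ _ => sqrt_nonneg _) hφ
    (fun τ hτ => add_nonneg (mul_nonneg (hg₀ τ hτ) (sqrt_nonneg _)) (by positivity)) hsq ht
  rw [hsplit] at key
  exact key.trans_eq (by ring)

/-- In `hC`, `1 + m⁻¹` turns a bound on `√(ω z² + z'²)` into one on `|z| + |z'|`, and `M + 2`
absorbs the initial energy and the forcing. -/
theorem abs_add_abs_le_of_oscillator {m M γ C : ℝ} {h : ℝ → ℝ} (hm : 0 < m) (hM : 0 ≤ M)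
    (hγ : 0 ≤ γ) (hC : (γ + 1) * ((1 + m⁻¹) * (M + 2)) ≤ C)
    (hω : ∀ t ∈ Icc a b, HasDerivAt ω (ω' t) t) (hω' : ContinuousOn ω' (Icc a b))
    (hωm : ∀ t ∈ Icc a b, m ^ 2 ≤ ω t ∧ ω t ≤ M ^ 2)
    (hh : ContinuousOn h (Icc a b)) (hh₀ : ∀ t ∈ Icc a b, 0 ≤ h t)
    (hωh : ∀ t ∈ Icc a b, |ω' t| ≤ γ * h t * ω t) (hk : IntegrableOn k (Icc a b))
    (hz : ∀ t ∈ Icc a b, HasDerivAt z (z' t) t) (hz' : ContinuousOn z' (Icc a b))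
    (hz'' : IntegrableOn z'' (Icc a b)) (hrep : ∀ t ∈ Icc a b, z' t = z' a + ∫ τ in a..t, z'' τ)
    (hode : ∀ᵐ t ∂volume.restrict (Icc a b), z'' t + ω t * z t = k t)
    {t : ℝ} (ht : t ∈ Icc a b) :
    |z t| + |z' t| ≤ C * (|z a| + |z' a| + ∫ τ in a..t, |k τ|)
      + C * ∫ τ in a..t, (|z a| + |z' a| + ∫ η in a..τ, |k η|) * h τ
          * exp (C * ∫ r in τ..t, h r) := by
  set F : ℝ → ℝ := fun t => |z a| + |z' a| + ∫ τ in a..t, |k τ|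
  have hab : a ≤ b := ht.1.trans ht.2
  have ha : a ∈ Icc a b := left_mem_Icc.2 hab
  have hsub : Icc a t ⊆ Icc a b := Icc_subset_Icc_right ht.2
  have hF : ContinuousOn F (Icc a b) :=
    continuousOn_const.add (continuousOn_integral_of_integrableOn hab hk.abs)
  have hK₀ : ∀ τ ∈ Icc a b, 0 ≤ ∫ η in a..τ, |k η| := fun τ hτ =>
    intervalIntegral.integral_nonneg hτ.1 fun _ _ => abs_nonneg _
  have hF₀ : ∀ τ ∈ Icc a b, 0 ≤ F τ := fun τ hτ => by positivity [hK₀ τ hτ]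
  have hω₀ : ∀ t ∈ Icc a b, 0 ≤ ω t := fun t ht => (sq_nonneg m).trans (hωm t ht).1
  have hγh : ContinuousOn (fun τ => γ * h τ) (Icc a b) := continuousOn_const.mul hh
  have hγh₀ : ∀ τ ∈ Icc a b, 0 ≤ γ * h τ := fun τ hτ => mul_nonneg hγ (hh₀ τ hτ)
  have hu : ContinuousOn (fun t => √(ω t * z t ^ 2 + z' t ^ 2)) (Icc a b) :=
    (((HasDerivAt.continuousOn hω).mul ((HasDerivAt.continuousOn hz).pow 2)).add
      (hz'.pow 2)).sqrt
  have hgron := le_add_integral_mul_exp_of_le_add_integral (B := fun τ => (M + 2) * F τ) hu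
    (continuousOn_const.mul hF).integrableOn_Icc hγh hγh₀ (fun x hx => by
      have := sqrt_energy_le_add_integral hω hω' hω₀ hγh hγh₀ hωh hk hz hz' hz'' hrep hode hx
      have := sqrt_mul_sq_add_sq_le (x := z a) (y := z' a) hM (hωm a ha).2
      nlinarith [mul_nonneg hM (hK₀ x hx), abs_nonneg (z a), abs_nonneg (z' a)]) ht
  set κ := (1 + m⁻¹) * (M + 2) with hκ_def
  have hκ : 1 ≤ κ := by
    have : 0 ≤ m⁻¹ := by positivity
    nlinarith
  have hγC : γ ≤ C := by nlinarith
  have hI : 0 ≤ ∫ τ in a..t, F τ * h τ * exp (γ * ∫ r in τ..t, h r) :=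
    intervalIntegral.integral_nonneg ht.1 fun τ hτ =>
      mul_nonneg (mul_nonneg (hF₀ τ (hsub hτ)) (hh₀ τ (hsub hτ))) (exp_pos _).le
  calc |z t| + |z' t| ≤ (1 + m⁻¹) * √(ω t * z t ^ 2 + z' t ^ 2) :=
        abs_add_abs_le_mul_sqrt hm (hωm t ht).1
    _ ≤ (1 + m⁻¹) * ((M + 2) * F t + ∫ τ in a..t, γ * h τ * ((M + 2) * F τ)
          * exp (∫ r in τ..t, γ * h r)) := mul_le_mul_of_nonneg_left hgron (by positivity)
    _ = κ * F t + γ * κ * ∫ τ in a..t, F τ * h τ * exp (γ * ∫ r in τ..t, h r) := by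
        rw [mul_add, ← intervalIntegral.integral_const_mul, ← intervalIntegral.integral_const_mul]
        congr 1
        · ring
        · congr 1; ext τ; rw [intervalIntegral.integral_const_mul]; ring
    _ ≤ C * F t + C * ∫ τ in a..t, F τ * h τ * exp (C * ∫ r in τ..t, h r) :=
        add_le_add (mul_le_mul_of_nonneg_right (by nlinarith) (hF₀ t ht))
          (mul_le_mul (by nlinarith) (integral_mul_exp_mul_integral_mono ht.1 hγC (hF.mono hsub)
            (fun τ hτ => hF₀ τ (hsub hτ)) (hh.mono hsub) (fun τ hτ => hh₀ τ (hsub hτ))) hI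
            (by linarith))

end Oscillator

lemma hasDerivAt_sq_div_one_add {G : ℝ → ℝ} {G' c t : ℝ} (hG : HasDerivAt G G' t)
    (h : 1 + G t ≠ 0) :
    HasDerivAt (fun x => c ^ 2 / (1 + G x)) (-(G' / (1 + G t)) * (c ^ 2 / (1 + G t))) t :=
  ((hasDerivAt_const t (c ^ 2)).div (hG.const_add 1) h).congr_deriv (by field_simp; ring)

lemma sq_div_one_add_mem_Icc {c G : ℝ} (hG : |G| ≤ 1 / 3) :
    (c / 2) ^ 2 ≤ c ^ 2 / (1 + G) ∧ c ^ 2 / (1 + G) ≤ (2 * c) ^ 2 := by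
  obtain ⟨hG₁, hG₂⟩ := abs_le.1 hG
  constructor
  · rw [le_div_iff₀ (by linarith)]; nlinarith [sq_nonneg c]
  · rw [div_le_iff₀ (by linarith)]; nlinarith [sq_nonneg c]

lemma abs_neg_div_one_add_mul_le {c G G' : ℝ} (hG : |G| ≤ 1 / 3) :
    |-(G' / (1 + G)) * (c ^ 2 / (1 + G))| ≤ 3 / 2 * |G'| * (c ^ 2 / (1 + G)) := by
  have h₁ : 0 < 1 + G := by linarith [(abs_le.1 hG).1]
  have h₂ : |G' / (1 + G)| ≤ 3 / 2 * |G'| := by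
    rw [abs_div, abs_of_pos h₁, div_le_iff₀ h₁]
    nlinarith [abs_nonneg G', (abs_le.1 hG).1]
  rw [abs_mul, abs_neg, abs_of_nonneg (by positivity : 0 ≤ c ^ 2 / (1 + G))]
  exact mul_le_mul_of_nonneg_right h₂ (by positivity)

/-- Uniform estimate for solutions of the perturbed oscillator ODE
`z″ + c²(1+G)⁻¹ z = k` on `[s₀, s₁]`, where `z′` is absolutely continuous with a.e.
derivative `z″` (encoded through the integral representation of `z′`). -/
theorem perturbed_oscillator_estimate (c : ℝ) (hc : 0 < c) :
    ∃ C > (0 : ℝ),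
      ∀ s₀ s₁ : ℝ, s₀ ≤ s₁ →
      ∀ G G' k z z' z'' : ℝ → ℝ, ∀ z₀ z₁ : ℝ,
        (∀ t ∈ Set.Icc s₀ s₁, HasDerivAt G (G' t) t) →
        ContinuousOn G' (Set.Icc s₀ s₁) →
        (∀ t ∈ Set.Icc s₀ s₁, |G t| ≤ 1 / 3) →
        IntegrableOn k (Set.Icc s₀ s₁) →
        (∀ t ∈ Set.Icc s₀ s₁, HasDerivAt z (z' t) t) →
        ContinuousOn z' (Set.Icc s₀ s₁) →
        IntegrableOn z'' (Set.Icc s₀ s₁) →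
        (∀ t ∈ Set.Icc s₀ s₁, z' t = z₁ + ∫ τ in s₀..t, z'' τ) →
        (∀ᵐ t ∂(volume.restrict (Set.Icc s₀ s₁)),
          z'' t + c ^ 2 / (1 + G t) * z t = k t) →
        z s₀ = z₀ →
        ∀ s ∈ Set.Icc s₀ s₁,
          |z s| + |z' s| ≤
            C * (|z₀| + |z₁| + ∫ τ in s₀..s, |k τ|)
              + C * ∫ τ in s₀..s,
                  (|z₀| + |z₁| + ∫ η in s₀..τ, |k η|) * |G' τ|
                    * Real.exp (C * ∫ r in τ..s, |G' r|) := by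
  refine ⟨(3 / 2 + 1) * ((1 + (c / 2)⁻¹) * (2 * c + 2)), by positivity,
    fun s₀ s₁ _ G G' k z z' z'' z₀ z₁ hG hG' hG₀ hk hz hz' hz'' hrep hode hz₀ s hs => ?_⟩
  have h1G : ∀ t ∈ Icc s₀ s₁, 1 + G t ≠ 0 := fun t ht => by linarith [(abs_le.1 (hG₀ t ht)).1]
  have hz'₀ : z' s₀ = z₁ := by simpa using hrep s₀ (left_mem_Icc.2 (hs.1.trans hs.2))
  have hGc : ContinuousOn (fun t => 1 + G t) (Icc s₀ s₁) :=
    continuousOn_const.add (HasDerivAt.continuousOn hG)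
  have hbound := abs_add_abs_le_of_oscillator (ω := fun t => c ^ 2 / (1 + G t)) (by positivity)
    (by positivity) (by norm_num) le_rfl
    (fun t ht => hasDerivAt_sq_div_one_add (hG t ht) (h1G t ht))
    (((hG'.div hGc h1G).neg).mul (continuousOn_const.div hGc h1G))
    (fun t ht => sq_div_one_add_mem_Icc (hG₀ t ht)) hG'.abs (fun _ _ => abs_nonneg _)
    (fun t ht => abs_neg_div_one_add_mul_le (hG₀ t ht)) hk hz hz' hz''
    (fun t ht => hz'₀ ▸ hrep t ht) hode hs
  rwa [hz₀, hz'₀] at hbound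
end

section
/- There exists a constant C > 0 such that for every s ≥ 2 and every smooth function u : ℝ × ℝ³ → ℝ that vanishes outside the future light cone K, one has (∫_{ℝ³} |x|^{−2} |u(√(s² + |x|²), x)|² dx)^{1/2} ≤ C Σ_{a=1}^{3} (∫_{ℝ³} |∂̄_a u(√(s² + |x|²), x)|² dx)^{1/2}. -/
noncomputable section
open MeasureTheory

/-- Spatial part: Euclidean 3-space. -/
abbrev E3 : Type := EuclideanSpace ℝ (Fin 3)

/-- Spacetime points `(t, x) ∈ ℝ × ℝ³`. -/
abbrev Spt : Type := ℝ × E3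

/-- Time derivative `∂_t`. -/
def dt (u : Spt → ℝ) : Spt → ℝ := fun p => fderiv ℝ u p (1, 0)

/-- Spatial derivative `∂_a`, `a = 1,2,3`. -/
def dx (a : Fin 3) (u : Spt → ℝ) : Spt → ℝ :=
  fun p => fderiv ℝ u p (0, EuclideanSpace.single a 1)

/-- Semi-hyperboloidal derivative `∂̄_a = (x^a/t) ∂_t + ∂_a`. -/
def shd (a : Fin 3) (u : Spt → ℝ) : Spt → ℝ :=
  fun p => (p.2 a / p.1) * dt u p + dx a u p

/-- The future light cone `K = {(t,x) : |x| < t − 1}`. -/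
def lightCone : Set Spt := {p : Spt | ‖p.2‖ < p.1 - 1}

/-!
On `H_s` put `z x = u (√(s² + ‖x‖²), x)`. Its coordinate derivatives are `∂_a z = ∂̄_a u`, and it
has compact support because `K ∩ H_s` is bounded. The theorem, with `C = 2`, is therefore the
classical Hardy inequality `∫ z² / ‖x‖² ≤ 4 ∫ ‖∇z‖²` in `ℝ³`, followed by `√(∑ Iₐ) ≤ ∑ √Iₐ`.

Hardy's inequality in dimension `n ≥ 2`, with constant `4 / (n - 2)²`, comes from integrating
`∇(z²)` against the field `x / (‖x‖² + ε²)`, whose divergence is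
`((n - 2) ‖x‖² + n ε²) / (‖x‖² + ε²)²`. The cross term is absorbed by AM–GM, and Fatou's lemma
lets `ε → 0`.
-/

open Filter Topology Module
open scoped RealInnerProductSpace

theorem Real.sqrt_sum_le_sum_sqrt {ι : Type*} (s : Finset ι) {f : ι → ℝ}
    (hf : ∀ i ∈ s, 0 ≤ f i) : √(∑ i ∈ s, f i) ≤ ∑ i ∈ s, √(f i) := by
  refine Real.sqrt_le_iff.mpr ⟨Finset.sum_nonneg fun i _ => Real.sqrt_nonneg _, ?_⟩
  calc ∑ i ∈ s, f i = ∑ i ∈ s, √(f i) ^ 2 :=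
        Finset.sum_congr rfl fun i hi => (Real.sq_sqrt (hf i hi)).symm
    _ ≤ _ := Finset.sum_sq_le_sq_sum_of_nonneg fun i _ => Real.sqrt_nonneg _

theorem integral_le_of_tendsto_of_integral_le {α ι : Type*} [MeasurableSpace α] {μ : Measure α}
    {l : Filter ι} [l.NeBot] [l.IsCountablyGenerated] {F : ι → α → ℝ} {f : α → ℝ} {C : ℝ}
    (hF : ∀ i, Integrable (F i) μ) (hF_nonneg : ∀ i x, 0 ≤ F i x)
    (hlim : ∀ᵐ x ∂μ, Tendsto (F · x) l (𝓝 (f x))) (hC : ∀ᶠ i in l, ∫ x, F i x ∂μ ≤ C) :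
    ∫ x, f x ∂μ ≤ C := by
  obtain ⟨i₀, hi₀⟩ := hC.exists
  have hC_nonneg : 0 ≤ C := (integral_nonneg (hF_nonneg i₀)).trans hi₀
  have hf_nonneg : 0 ≤ᵐ[μ] f := hlim.mono fun x hx => ge_of_tendsto' hx fun i => hF_nonneg i x
  have hf_meas : AEStronglyMeasurable f μ :=
    aestronglyMeasurable_of_tendsto_ae l (fun i => (hF i).aestronglyMeasurable) hlim
  have fatou : ∫⁻ x, ENNReal.ofReal (f x) ∂μ ≤ ENNReal.ofReal C := calc
    ∫⁻ x, ENNReal.ofReal (f x) ∂μ = ∫⁻ x, liminf (fun i => ENNReal.ofReal (F i x)) l ∂μ := by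
        refine lintegral_congr_ae ?_
        filter_upwards [hlim] with x hx
        exact ((ENNReal.continuous_ofReal.tendsto _).comp hx).liminf_eq.symm
    _ ≤ liminf (fun i => ∫⁻ x, ENNReal.ofReal (F i x) ∂μ) l :=
        lintegral_liminf_le' fun i => (hF i).aemeasurable.ennreal_ofReal
    _ ≤ ENNReal.ofReal C := by
        refine liminf_le_of_frequently_le' (hC.mono fun i hi => ?_).frequently
        rw [← ofReal_integral_eq_lintegral_ofReal (hF i) (.of_forall (hF_nonneg i))]
        exact ENNReal.ofReal_le_ofReal hi
  rw [integral_eq_lintegral_of_nonneg_ae hf_nonneg hf_meas]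
  exact ENNReal.toReal_le_of_le_ofReal hC_nonneg fatou

-- At `r = 0` the limit is `0⁻¹ ^ 2 = 0`, which is also the value of `‖x‖⁻¹ ^ 2 * z x ^ 2`
-- at `x = 0`.
theorem tendsto_sq_div_sq_add_sq_sq (r : ℝ) :
    Tendsto (fun ε : ℝ => r ^ 2 / (r ^ 2 + ε ^ 2) ^ 2) (𝓝 0) (𝓝 (r⁻¹ ^ 2)) := by
  rcases eq_or_ne r 0 with rfl | hr
  · simp
  · have hcont : ContinuousAt (fun ε : ℝ => r ^ 2 / (r ^ 2 + ε ^ 2) ^ 2) 0 :=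
      continuousAt_const.div (by fun_prop) (by positivity)
    convert hcont.tendsto using 2
    field_simp
    ring

section NormedSpace

variable {E : Type*} [NormedAddCommGroup E] [NormedSpace ℝ E]

-- AM–GM `2ab ≤ a²/2 + 2b²` with `a = c |t| ‖x‖ / w` and `b = ‖L‖`.
theorem neg_mul_two_mul_apply_div_le (L : E →L[ℝ] ℝ) (x : E) {c t w : ℝ} (hc : 0 ≤ c)
    (hw : 0 < w) :
    -(c * (2 * t * L x / w)) ≤ c ^ 2 / 2 * (‖x‖ ^ 2 / w ^ 2 * t ^ 2) + 2 * ‖L‖ ^ 2 := by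
  have hop : -(t * L x) ≤ |t| * (‖L‖ * ‖x‖) :=
    (neg_le_abs _).trans <| (abs_mul _ _).trans_le <|
      mul_le_mul_of_nonneg_left (L.le_opNorm x) (abs_nonneg _)
  set a := c * |t| * ‖x‖ / w
  calc -(c * (2 * t * L x / w)) = c * (2 / w) * -(t * L x) := by ring
    _ ≤ c * (2 / w) * (|t| * (‖L‖ * ‖x‖)) := by gcongr
    _ = 2 * a * ‖L‖ := by ring
    _ ≤ a ^ 2 / 2 + 2 * ‖L‖ ^ 2 := by linarith [sq_nonneg (a - 2 * ‖L‖)]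
    _ = _ := by simp only [a, div_pow, mul_pow, sq_abs]; ring

variable [FiniteDimensional ℝ E] [MeasurableSpace E] [BorelSpace E] {μ : Measure E}
  [μ.IsAddHaarMeasure]

theorem integral_fderiv_mul_eq_neg_mul_fderiv_of_hasCompactSupport {f g : E → ℝ}
    (hf : ContDiff ℝ 1 f) (hf_supp : HasCompactSupport f) (hg : ContDiff ℝ 1 g) (v : E) :
    ∫ x, fderiv ℝ f x v * g x ∂μ = -∫ x, f x * fderiv ℝ g x v ∂μ := by
  have hf' := (hf.continuous_fderiv one_ne_zero).clm_apply (continuous_const (y := v))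
  have hg' := (hg.continuous_fderiv one_ne_zero).clm_apply (continuous_const (y := v))
  rw [integral_mul_fderiv_eq_neg_fderiv_mul_of_integrable, neg_neg]
  · exact (hf'.mul hg.continuous).integrable_of_hasCompactSupport
      (hf_supp.fderiv_apply ℝ v).mul_right
  · exact (hf.continuous.mul hg').integrable_of_hasCompactSupport hf_supp.mul_right
  · exact (hf.continuous.mul hg.continuous).integrable_of_hasCompactSupport hf_supp.mul_right
  · exact fun x _ => hf.differentiable one_ne_zero x
  · exact fun x _ => hg.differentiable one_ne_zero x

end NormedSpace

section InnerProductSpace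

variable {E : Type*} [NormedAddCommGroup E] [InnerProductSpace ℝ E]

theorem hasFDerivAt_inner_div_norm_sq_add_sq {ε : ℝ} (hε : ε ≠ 0) (v x : E) :
    HasFDerivAt (fun y => ⟪v, y⟫ / (‖y‖ ^ 2 + ε ^ 2))
      ((‖x‖ ^ 2 + ε ^ 2)⁻¹ • innerSL ℝ v - (2 * ⟪v, x⟫ / (‖x‖ ^ 2 + ε ^ 2) ^ 2) • innerSL ℝ x)
      x := by
  have hinv := (hasDerivAt_inv (by positivity : ‖x‖ ^ 2 + ε ^ 2 ≠ 0)).comp_hasFDerivAt x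
    ((hasStrictFDerivAt_norm_sq x).hasFDerivAt.add_const (ε ^ 2))
  refine (((innerSL ℝ v).hasFDerivAt (x := x)).mul hinv).congr_fderiv ?_
  ext w
  simp only [coe_innerSL_apply, neg_smul, smul_neg, Function.comp_apply, add_apply, neg_apply,
    smul_apply, nsmul_eq_mul, Nat.cast_ofNat, smul_eq_mul, sub_apply]
  ring

theorem contDiff_inner_div_norm_sq_add_sq {ε : ℝ} (hε : ε ≠ 0) (v : E) {n : WithTop ℕ∞} :
    ContDiff ℝ n (fun y : E => ⟪v, y⟫ / (‖y‖ ^ 2 + ε ^ 2)) :=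
  (contDiff_const.inner ℝ contDiff_id).div ((contDiff_norm_sq ℝ).add contDiff_const)
    fun y => by positivity

-- The divergence of the vector field `y ↦ y / (‖y‖² + ε²)`.
theorem OrthonormalBasis.sum_fderiv_inner_div_norm_sq_add_sq_apply {ι : Type*} [Fintype ι]
    (b : OrthonormalBasis ι ℝ E) {ε : ℝ} (hε : ε ≠ 0) (x : E) :
    ∑ i, fderiv ℝ (fun y => ⟪b i, y⟫ / (‖y‖ ^ 2 + ε ^ 2)) x (b i) =
      (((Fintype.card ι : ℝ) - 2) * ‖x‖ ^ 2 + Fintype.card ι * ε ^ 2) /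
        (‖x‖ ^ 2 + ε ^ 2) ^ 2 := by
  have hW : ‖x‖ ^ 2 + ε ^ 2 ≠ 0 := by positivity
  have hsum : ∑ i, 2 * ⟪b i, x⟫ / (‖x‖ ^ 2 + ε ^ 2) ^ 2 * ⟪x, b i⟫ =
      2 / (‖x‖ ^ 2 + ε ^ 2) ^ 2 * ‖x‖ ^ 2 := by
    rw [← real_inner_self_eq_norm_sq, ← b.sum_inner_mul_inner x x, Finset.mul_sum]
    exact Finset.sum_congr rfl fun i _ => by rw [real_inner_comm x]; ring
  simp only [(hasFDerivAt_inner_div_norm_sq_add_sq hε _ x).fderiv, sub_apply, smul_apply,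
    coe_innerSL_apply, real_inner_self_eq_norm_sq, b.norm_eq_one, one_pow, smul_eq_mul, mul_one,
    Finset.sum_sub_distrib, Finset.sum_const, Finset.card_univ, nsmul_eq_mul, hsum]
  field_simp
  ring

variable [MeasurableSpace E] [BorelSpace E] {μ : Measure E} [μ.IsAddHaarMeasure]

theorem integral_norm_fderiv_sq_eq_sum {ι : Type*} [Fintype ι] (b : OrthonormalBasis ι ℝ E)
    {z : E → ℝ} (hz : ContDiff ℝ 1 z) (hz_supp : HasCompactSupport z) :
    ∫ x, ‖fderiv ℝ z x‖ ^ 2 ∂μ = ∑ i, ∫ x, fderiv ℝ z x (b i) ^ 2 ∂μ := by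
  simp_rw [b.norm_dual]
  refine integral_finsetSum _ fun i _ => ?_
  exact (((hz.continuous_fderiv one_ne_zero).clm_apply continuous_const).pow 2)
    |>.integrable_of_hasCompactSupport
      ((hz_supp.fderiv_apply ℝ (b i)).mono fun x hx h => hx (by simp [h]))

variable [FiniteDimensional ℝ E]

theorem integral_fderiv_apply_self_div_norm_sq_add_sq {f : E → ℝ} (hf : ContDiff ℝ 1 f)
    (hf_supp : HasCompactSupport f) {ε : ℝ} (hε : ε ≠ 0) :
    ∫ x, fderiv ℝ f x x / (‖x‖ ^ 2 + ε ^ 2) ∂μ =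
      -∫ x, f x * ((((finrank ℝ E : ℝ) - 2) * ‖x‖ ^ 2 + finrank ℝ E * ε ^ 2) /
        (‖x‖ ^ 2 + ε ^ 2) ^ 2) ∂μ := by
  set b := stdOrthonormalBasis ℝ E
  set g : Fin (finrank ℝ E) → E → ℝ := fun i y => ⟪b i, y⟫ / (‖y‖ ^ 2 + ε ^ 2)
  have hg (i) : ContDiff ℝ 1 (g i) := contDiff_inner_div_norm_sq_add_sq hε _
  have hsplit (x : E) :
      fderiv ℝ f x x / (‖x‖ ^ 2 + ε ^ 2) = ∑ i, fderiv ℝ f x (b i) * g i x := by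
    rw [← congrArg (fderiv ℝ f x) (b.sum_repr' x)]
    simp only [map_sum, map_smul, smul_eq_mul, Finset.sum_div, g]
    exact Finset.sum_congr rfl fun i _ => by ring
  have hdiv (x : E) : ∑ i, f x * fderiv ℝ (g i) x (b i) =
      f x * ((((finrank ℝ E : ℝ) - 2) * ‖x‖ ^ 2 + finrank ℝ E * ε ^ 2) /
        (‖x‖ ^ 2 + ε ^ 2) ^ 2) := by
    rw [← Finset.mul_sum, b.sum_fderiv_inner_div_norm_sq_add_sq_apply hε, Fintype.card_fin]
  calc ∫ x, fderiv ℝ f x x / (‖x‖ ^ 2 + ε ^ 2) ∂μ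
      = ∑ i, ∫ x, fderiv ℝ f x (b i) * g i x ∂μ := by
        simp_rw [hsplit]
        refine integral_finsetSum _ fun i _ => ?_
        exact ((hf.continuous_fderiv one_ne_zero).clm_apply continuous_const).mul
          (hg i).continuous |>.integrable_of_hasCompactSupport
            (hf_supp.fderiv_apply ℝ _).mul_right
    _ = ∑ i, -∫ x, f x * fderiv ℝ (g i) x (b i) ∂μ := by
        simp_rw [integral_fderiv_mul_eq_neg_mul_fderiv_of_hasCompactSupport hf hf_supp (hg _)]
    _ = _ := by
        rw [Finset.sum_neg_distrib, ← integral_finsetSum]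
        · simp_rw [hdiv]
        · refine fun i _ => (hf.continuous.mul ?_).integrable_of_hasCompactSupport
            hf_supp.mul_right
          exact ((hg i).continuous_fderiv one_ne_zero).clm_apply continuous_const

theorem hardy_inequality_regularized (hn : 2 ≤ finrank ℝ E) {z : E → ℝ} (hz : ContDiff ℝ 1 z)
    (hz_supp : HasCompactSupport z) {ε : ℝ} (hε : ε ≠ 0) :
    ((finrank ℝ E : ℝ) - 2) ^ 2 * ∫ x, ‖x‖ ^ 2 / (‖x‖ ^ 2 + ε ^ 2) ^ 2 * z x ^ 2 ∂μ ≤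
      4 * ∫ x, ‖fderiv ℝ z x‖ ^ 2 ∂μ := by
  have hint {g : E → ℝ} (hg : Continuous g) (h0 : ∀ x, z x = 0 → g x = 0) : Integrable g μ :=
    hg.integrable_of_hasCompactSupport (hz_supp.mono fun x hx h => hx (h0 x h))
  have hDz_sq : Integrable (fun x => ‖fderiv ℝ z x‖ ^ 2) μ :=
    ((hz.continuous_fderiv one_ne_zero).norm.pow 2).integrable_of_hasCompactSupport
      ((hz_supp.fderiv ℝ).mono fun x hx h => hx (by simp [h]))
  have hD_sq (x : E) : fderiv ℝ (fun y => z y ^ 2) x x = 2 * z x * fderiv ℝ z x x := by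
    simp [fderiv_fun_pow, hz.differentiable one_ne_zero x]
  have ibp := integral_fderiv_apply_self_div_norm_sq_add_sq (μ := μ) (hz.pow 2)
    (hz_supp.mono fun x hx h => hx (by simp [h])) hε
  simp_rw [hD_sq] at ibp
  have hk : (0 : ℝ) ≤ finrank ℝ E - 2 := by
    have : (2 : ℝ) ≤ finrank ℝ E := by exact_mod_cast hn
    linarith
  set n : ℝ := (finrank ℝ E : ℝ)
  set I := ∫ x, ‖x‖ ^ 2 / (‖x‖ ^ 2 + ε ^ 2) ^ 2 * z x ^ 2 ∂μ
  have hI : Integrable (fun x => ‖x‖ ^ 2 / (‖x‖ ^ 2 + ε ^ 2) ^ 2 * z x ^ 2) μ :=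
    hint (by fun_prop (disch := intro x; positivity)) fun x h => by simp [h]
  have lower : (n - 2) * I ≤
      ∫ x, z x ^ 2 * (((n - 2) * ‖x‖ ^ 2 + n * ε ^ 2) / (‖x‖ ^ 2 + ε ^ 2) ^ 2) ∂μ := by
    rw [← integral_const_mul]
    refine integral_mono (hI.const_mul _) ?_ fun x => ?_
    · exact hint (by fun_prop (disch := intro x; positivity)) fun x h => by simp [h]
    · calc (n - 2) * (‖x‖ ^ 2 / (‖x‖ ^ 2 + ε ^ 2) ^ 2 * z x ^ 2)
          = z x ^ 2 * ((n - 2) * ‖x‖ ^ 2 / (‖x‖ ^ 2 + ε ^ 2) ^ 2) := by ring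
        _ ≤ _ := by
          gcongr
          exact le_add_of_nonneg_right (mul_nonneg (Nat.cast_nonneg _) (sq_nonneg ε))
  have upper : -((n - 2) * ∫ x, 2 * z x * fderiv ℝ z x x / (‖x‖ ^ 2 + ε ^ 2) ∂μ) ≤
      (n - 2) ^ 2 / 2 * I + 2 * ∫ x, ‖fderiv ℝ z x‖ ^ 2 ∂μ := by
    rw [← integral_const_mul, ← integral_neg, ← integral_const_mul, ← integral_const_mul,
      ← integral_add (hI.const_mul _) (hDz_sq.const_mul _)]
    refine integral_mono ?_ ((hI.const_mul _).add (hDz_sq.const_mul _)) fun x =>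
      neg_mul_two_mul_apply_div_le _ x hk (by positivity)
    exact hint (by fun_prop (disch := intro x; positivity)) fun x h => by simp [h]
  rw [ibp] at upper
  nlinarith [mul_le_mul_of_nonneg_left lower hk]

theorem hardy_inequality (hn : 2 ≤ finrank ℝ E) {z : E → ℝ} (hz : ContDiff ℝ 1 z)
    (hz_supp : HasCompactSupport z) :
    ((finrank ℝ E : ℝ) - 2) ^ 2 * ∫ x, ‖x‖⁻¹ ^ 2 * z x ^ 2 ∂μ ≤
      4 * ∫ x, ‖fderiv ℝ z x‖ ^ 2 ∂μ := by
  -- Fatou's lemma along `ε = 1 / (k + 1)`, which needs no integrability of `‖x‖⁻¹ ^ 2 * z x ^ 2`.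
  rw [← integral_const_mul]
  refine integral_le_of_tendsto_of_integral_le (l := atTop)
    (F := fun (k : ℕ) x => ((finrank ℝ E : ℝ) - 2) ^ 2 *
      (‖x‖ ^ 2 / (‖x‖ ^ 2 + ((k : ℝ) + 1)⁻¹ ^ 2) ^ 2 * z x ^ 2)) (fun k => ?_) (fun k x => ?_)
    (.of_forall fun x => ?_) (.of_forall fun k => ?_)
  · refine Continuous.integrable_of_hasCompactSupport
      (by fun_prop (disch := intro x; positivity)) ?_
    exact hz_supp.mono fun x hx h => hx (by simp [h])
  · positivity
  · have hlim := tendsto_one_div_add_atTop_nhds_zero_nat (𝕜 := ℝ)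
    simp only [one_div] at hlim
    exact (((tendsto_sq_div_sq_add_sq_sq ‖x‖).comp hlim).mul_const _).const_mul _
  · rw [integral_const_mul]
    exact hardy_inequality_regularized hn hz hz_supp (by positivity)

end InnerProductSpace

section Hyperboloid

variable {F : Type*} [NormedAddCommGroup F] [InnerProductSpace ℝ F]

def hyperboloidPoint (s : ℝ) (x : F) : ℝ × F := (√(s ^ 2 + ‖x‖ ^ 2), x)

theorem contDiff_hyperboloidPoint {s : ℝ} (hs : s ≠ 0) {n : WithTop ℕ∞} :
    ContDiff ℝ n (hyperboloidPoint (F := F) s) :=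
  ((contDiff_const.add (contDiff_norm_sq ℝ)).sqrt fun x => by positivity).prodMk contDiff_id

theorem fderiv_hyperboloidPoint_apply {s : ℝ} (hs : s ≠ 0) (x v : F) :
    fderiv ℝ (hyperboloidPoint s) x v = (⟪x, v⟫ / √(s ^ 2 + ‖x‖ ^ 2), v) := by
  have h := (((hasStrictFDerivAt_norm_sq x).hasFDerivAt.const_add (s ^ 2)).sqrt
    (by positivity)).prodMk (hasFDerivAt_id x)
  rw [show hyperboloidPoint s = fun y : F => (√(s ^ 2 + ‖y‖ ^ 2), id y) from rfl, h.fderiv]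
  simp only [ContinuousLinearMap.prod_apply, ContinuousLinearMap.id_apply, smul_apply,
    coe_innerSL_apply, nsmul_eq_mul, Nat.cast_ofNat, smul_eq_mul, Prod.mk.injEq, and_true]
  ring

end Hyperboloid

theorem fderiv_comp_hyperboloidPoint_single {u : Spt → ℝ} (hu : Differentiable ℝ u) {s : ℝ}
    (hs : s ≠ 0) (x : E3) (a : Fin 3) :
    fderiv ℝ (u ∘ hyperboloidPoint s) x (EuclideanSpace.single a 1) =
      shd a u (hyperboloidPoint s x) := by
  rw [fderiv_comp x (hu _) ((contDiff_hyperboloidPoint hs (n := 1)).differentiable one_ne_zero x),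
    ContinuousLinearMap.comp_apply, fderiv_hyperboloidPoint_apply hs]
  have hinner : ⟪x, EuclideanSpace.single a 1⟫ = x a := by
    simp [EuclideanSpace.inner_single_right]
  have hsplit : ((x a / √(s ^ 2 + ‖x‖ ^ 2), EuclideanSpace.single a 1) : Spt) =
      (x a / √(s ^ 2 + ‖x‖ ^ 2)) • ((1 : ℝ), (0 : E3)) + (0, EuclideanSpace.single a 1) := by
    ext <;> simp
  rw [hinner, hsplit, map_add, map_smul]
  rfl

theorem hasCompactSupport_comp_hyperboloidPoint {u : Spt → ℝ}
    (hu : ∀ p, p ∉ lightCone → u p = 0) (s : ℝ) :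
    HasCompactSupport (u ∘ hyperboloidPoint s) := by
  refine HasCompactSupport.intro (isCompact_closedBall (0 : E3) ((s ^ 2 - 1) / 2))
    fun x hx => hu _ ?_
  rw [Metric.mem_closedBall, dist_zero_right, not_le] at hx
  simp only [lightCone, hyperboloidPoint, Set.mem_ofPred_eq, not_lt]
  have : √(s ^ 2 + ‖x‖ ^ 2) ≤ ‖x‖ + 1 := Real.sqrt_le_iff.mpr ⟨by positivity, by nlinarith⟩
  linarith

/-- Hardy inequality on hyperboloids, for smooth functions vanishing outside the
future light cone `K`. -/
theorem hardy_inequality_on_hyperboloids :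
    ∃ C > (0 : ℝ), ∀ s : ℝ, 2 ≤ s →
      ∀ u : Spt → ℝ, ContDiff ℝ (⊤ : ℕ∞) u →
        (∀ p : Spt, p ∉ lightCone → u p = 0) →
        Real.sqrt (∫ x : E3, ‖x‖⁻¹ ^ 2 * (u (Real.sqrt (s ^ 2 + ‖x‖ ^ 2), x)) ^ 2) ≤
          C * ∑ a : Fin 3,
            Real.sqrt (∫ x : E3, (shd a u (Real.sqrt (s ^ 2 + ‖x‖ ^ 2), x)) ^ 2) := by
  refine ⟨2, two_pos, fun s hs u hu hu_supp => ?_⟩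
  have hs0 : s ≠ 0 := by positivity
  have hz : ContDiff ℝ 1 (u ∘ hyperboloidPoint s) :=
    (hu.of_le (by exact_mod_cast le_top)).comp (contDiff_hyperboloidPoint hs0)
  have hz_supp := hasCompactSupport_comp_hyperboloidPoint hu_supp s
  have hardy : ∫ x : E3, ‖x‖⁻¹ ^ 2 * u (hyperboloidPoint s x) ^ 2 ≤
      2 ^ 2 * ∫ x : E3, ‖fderiv ℝ (u ∘ hyperboloidPoint s) x‖ ^ 2 := by
    have h := hardy_inequality (μ := volume) (by simp) hz hz_supp
    norm_num [finrank_euclideanSpace_fin] at h ⊢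
    exact h
  have hgrad := integral_norm_fderiv_sq_eq_sum (μ := volume) (EuclideanSpace.basisFun (Fin 3) ℝ)
    hz hz_supp
  simp only [EuclideanSpace.basisFun_apply,
    fderiv_comp_hyperboloidPoint_single (hu.differentiable (by simp)) hs0] at hgrad
  have hshd_nonneg (a : Fin 3) : 0 ≤ ∫ x : E3, shd a u (hyperboloidPoint s x) ^ 2 :=
    integral_nonneg fun x => sq_nonneg _
  calc √(∫ x : E3, ‖x‖⁻¹ ^ 2 * u (hyperboloidPoint s x) ^ 2)
      ≤ √(2 ^ 2 * ∫ x : E3, ‖fderiv ℝ (u ∘ hyperboloidPoint s) x‖ ^ 2) := Real.sqrt_le_sqrt hardy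
    _ = 2 * √(∑ a : Fin 3, ∫ x : E3, shd a u (hyperboloidPoint s x) ^ 2) := by
        rw [hgrad, Real.sqrt_mul' _ (Finset.sum_nonneg fun a _ => hshd_nonneg a),
          Real.sqrt_sq zero_le_two]
    _ ≤ 2 * ∑ a : Fin 3, √(∫ x : E3, shd a u (hyperboloidPoint s x) ^ 2) := by
        gcongr
        exact Real.sqrt_sum_le_sum_sqrt _ fun a _ => hshd_nonneg a
end
end

section
/- Let α ∈ ℝ and let Φ : {(t,x) ∈ ℝ × ℝ³ : |x| < t} → ℝ be smooth and homogeneous of degree α, i.e. Φ(λt, λx) = λ^α Φ(t,x) for all λ > 0 and |x| < t, and suppose sup_{|x| < 1} |∂^I Φ(1, x)| < ∞ for every word I. Then for all words I (with letters in {0,1,2,3}) and J (with letters in {1,2,3}) there exists a constant C, depending only on Φ, I and J, such that |∂^I L^J Φ(t, x)| ≤ C t^{α − |I|} for all (t,x) with |x| < t. -/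
noncomputable section

/-- `∂_α` for `α ∈ {0,1,2,3}`, with `∂_0 = ∂_t`. -/
def pd : Fin 4 → (Spt → ℝ) → Spt → ℝ := ![dt, dx 0, dx 1, dx 2]

/-- Iterated derivatives `∂^I` for a word `I` in `{0,1,2,3}`. -/
def pdW : List (Fin 4) → (Spt → ℝ) → Spt → ℝ
  | [], u => u
  | α :: I, u => pd α (pdW I u)

/-- Lorentz boost `L_a = x^a ∂_t + t ∂_a`. -/
def lb (a : Fin 3) (u : Spt → ℝ) : Spt → ℝ :=
  fun p => p.2 a * dt u p + p.1 * dx a u p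

/-- Iterated Lorentz boosts `L^J` for a word `J` in `{1,2,3}`. -/
def lbW : List (Fin 3) → (Spt → ℝ) → Spt → ℝ
  | [], u => u
  | a :: J, u => lb a (lbW J u)


/-!
Homogeneity of degree `β` on the cone `|x| < t` passes to `∂_α` with degree `β - 1`
(differentiate `u (l • p) = l ^ β * u p`) and to the boosts `L_a` with degree `β`, their
coefficients `x^a`, `t` being homogeneous of degree one. Hence `∂^I L^J Φ` is homogeneous of
degree `α - |I|`, and writing `(t, x) = t • (1, x / t)` reduces the bound to the slice `t = 1`.
There it holds because `∂^I L^J Φ` is a combination of derivatives `∂^K Φ` with coefficients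
linear in `(t, x)`, all of which are bounded on the slice.
-/

open Set Filter Topology
open scoped ContDiff

section Homogeneous

variable {E : Type*} [NormedAddCommGroup E] [NormedSpace ℝ E]

def IsHomogeneousOn (s : Set E) (β : ℝ) (u : E → ℝ) : Prop :=
  ∀ l : ℝ, 0 < l → ∀ p ∈ s, u (l • p) = l ^ β * u p

theorem IsHomogeneousOn.fderiv_smul {s : Set E} {β : ℝ} {u : E → ℝ}
    (h : IsHomogeneousOn s β u) (hs : IsOpen s) {l : ℝ} (hl : 0 < l) {p : E} (hp : p ∈ s) :
    fderiv ℝ u (l • p) = l ^ (β - 1) • fderiv ℝ u p := by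
  have hloc : (fun q => u (l • q)) =ᶠ[𝓝 p] l ^ β • u :=
    eventuallyEq_of_mem (hs.mem_nhds hp) fun q hq => h l hl q hq
  have hderiv : l • fderiv ℝ u (l • p) = l ^ β • fderiv ℝ u p := by
    rw [← fderiv_comp_smul, hloc.fderiv_eq, fderiv_const_smul_field]
    rfl
  rw [Real.rpow_sub_one hl.ne', div_eq_inv_mul, mul_smul, ← hderiv, smul_smul,
    inv_mul_cancel₀ hl.ne', one_smul]

end Homogeneous

def forwardCone : Set Spt := {p : Spt | ‖p.2‖ < p.1}

theorem isOpen_forwardCone : IsOpen forwardCone :=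
  isOpen_lt continuous_snd.norm continuous_fst

theorem pos_of_mem_forwardCone {p : Spt} (hp : p ∈ forwardCone) : 0 < p.1 :=
  (norm_nonneg _).trans_lt hp

def pdDir : Fin 4 → Spt :=
  ![(1, 0), (0, EuclideanSpace.single 0 1), (0, EuclideanSpace.single 1 1),
    (0, EuclideanSpace.single 2 1)]

theorem pd_apply (α : Fin 4) (u : Spt → ℝ) (p : Spt) : pd α u p = fderiv ℝ u p (pdDir α) := by
  fin_cases α <;> rfl

theorem pd_zero (u : Spt → ℝ) : pd 0 u = dt u := rfl

theorem pd_succ (a : Fin 3) (u : Spt → ℝ) : pd a.succ u = dx a u := by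
  fin_cases a <;> rfl

section Derivatives

variable {u v : Spt → ℝ}

theorem ContDiffOn.differentiableAt_of_forwardCone (hu : ContDiffOn ℝ ∞ u forwardCone)
    {p : Spt} (hp : p ∈ forwardCone) : DifferentiableAt ℝ u p :=
  (hu.contDiffAt (isOpen_forwardCone.mem_nhds hp)).differentiableAt (by simp)

theorem contDiffOn_pd (α : Fin 4) (hu : ContDiffOn ℝ ∞ u forwardCone) :
    ContDiffOn ℝ ∞ (pd α u) forwardCone := by
  have h := ((contDiffOn_infty_iff_fderiv_of_isOpen isOpen_forwardCone).1 hu).2.clm_apply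
    (contDiffOn_const (c := pdDir α))
  exact h.congr fun p _ => pd_apply α u p

theorem contDiffOn_pdW (I : List (Fin 4)) (hu : ContDiffOn ℝ ∞ u forwardCone) :
    ContDiffOn ℝ ∞ (pdW I u) forwardCone := by
  induction I with
  | nil => exact hu
  | cons α I ih => exact contDiffOn_pd α ih

theorem pd_congr (h : EqOn u v forwardCone) (α : Fin 4) :
    EqOn (pd α u) (pd α v) forwardCone := fun p hp => by
  rw [pd_apply, pd_apply, (eventuallyEq_of_mem (isOpen_forwardCone.mem_nhds hp) h).fderiv_eq]

theorem pdW_congr (h : EqOn u v forwardCone) (I : List (Fin 4)) :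
    EqOn (pdW I u) (pdW I v) forwardCone := by
  induction I with
  | nil => exact h
  | cons α I ih => exact pd_congr ih α

theorem pd_add (α : Fin 4) (hu : ContDiffOn ℝ ∞ u forwardCone)
    (hv : ContDiffOn ℝ ∞ v forwardCone) :
    EqOn (pd α (u + v)) (pd α u + pd α v) forwardCone := fun p hp => by
  simp [pd_apply,
    fderiv_add (hu.differentiableAt_of_forwardCone hp) (hv.differentiableAt_of_forwardCone hp)]

theorem pdW_add (I : List (Fin 4)) (hu : ContDiffOn ℝ ∞ u forwardCone)
    (hv : ContDiffOn ℝ ∞ v forwardCone) :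
    EqOn (pdW I (u + v)) (pdW I u + pdW I v) forwardCone := by
  induction I with
  | nil => exact fun _ _ => rfl
  | cons α I ih =>
    exact (pd_congr ih α).trans (pd_add α (contDiffOn_pdW I hu) (contDiffOn_pdW I hv))

theorem pd_const_smul (α : Fin 4) (c : ℝ) (u : Spt → ℝ) : pd α (c • u) = c • pd α u := by
  ext p
  simp [pd_apply, fderiv_const_smul_field]

theorem pdW_const_smul (I : List (Fin 4)) (c : ℝ) (u : Spt → ℝ) :
    pdW I (c • u) = c • pdW I u := by
  induction I with
  | nil => rfl
  | cons α I ih => exact (congrArg (pd α) ih).trans (pd_const_smul α c _)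

theorem pdW_append (I : List (Fin 4)) (α : Fin 4) (u : Spt → ℝ) :
    pdW (I ++ [α]) u = pdW I (pd α u) := by
  induction I with
  | nil => rfl
  | cons β I ih => exact congrArg (pd β) ih

theorem pd_clm_mul (α : Fin 4) (L : Spt →L[ℝ] ℝ) (hu : ContDiffOn ℝ ∞ u forwardCone) :
    EqOn (pd α (fun q => L q * u q)) (L (pdDir α) • u + fun q => L q * pd α u q)
      forwardCone := fun p hp => by
  rw [Pi.add_apply, pd_apply, pd_apply,
    fderiv_fun_mul L.differentiableAt (hu.differentiableAt_of_forwardCone hp), L.fderiv]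
  simp only [add_apply, smul_apply, smul_eq_mul, Pi.smul_apply]
  ring

end Derivatives

section HomogeneousOnCone

variable {β : ℝ} {u : Spt → ℝ}

theorem IsHomogeneousOn.pd (h : IsHomogeneousOn forwardCone β u)
    (α : Fin 4) : IsHomogeneousOn forwardCone (β - 1) (pd α u) := fun l hl p hp => by
  rw [pd_apply, pd_apply, h.fderiv_smul isOpen_forwardCone hl hp]
  rfl

theorem IsHomogeneousOn.pdW (h : IsHomogeneousOn forwardCone β u)
    (I : List (Fin 4)) : IsHomogeneousOn forwardCone (β - I.length) (pdW I u) := by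
  induction I with
  | nil => rw [List.length_nil, Nat.cast_zero, sub_zero]; exact h
  | cons α I ih =>
    rw [List.length_cons, Nat.cast_succ, ← sub_sub]
    exact ih.pd α

theorem IsHomogeneousOn.lb (h : IsHomogeneousOn forwardCone β u)
    (a : Fin 3) : IsHomogeneousOn forwardCone β (lb a u) := fun l hl p hp => by
  have hdt : dt u (l • p) = l ^ (β - 1) * dt u p := (h.pd 0) l hl p hp
  have hdx : dx a u (l • p) = l ^ (β - 1) * dx a u p := by
    simpa only [pd_succ] using (h.pd a.succ) l hl p hp
  have hpow : l ^ β = l * l ^ (β - 1) := by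
    rw [Real.rpow_sub_one hl.ne', mul_div_cancel₀ _ hl.ne']
  simp only [_root_.lb, hdt, hdx, hpow, Prod.smul_fst, Prod.smul_snd, PiLp.smul_apply, smul_eq_mul]
  ring

theorem IsHomogeneousOn.lbW (h : IsHomogeneousOn forwardCone β u)
    (J : List (Fin 3)) : IsHomogeneousOn forwardCone β (lbW J u) := by
  induction J with
  | nil => exact h
  | cons a J ih => exact ih.lb a

theorem IsHomogeneousOn.abs_le {M : ℝ} (h : IsHomogeneousOn forwardCone β u)
    (hM : ∀ x : E3, ‖x‖ < 1 → |u (1, x)| ≤ M) {p : Spt} (hp : p ∈ forwardCone) :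
    |u p| ≤ M * p.1 ^ β := by
  obtain ⟨t, x⟩ := p
  have ht : 0 < t := pos_of_mem_forwardCone hp
  have hx : ‖t⁻¹ • x‖ < 1 := by
    rw [norm_smul, norm_inv, Real.norm_of_nonneg ht.le, inv_mul_lt_one₀ ht]
    exact hp
  have hscale : u (t, x) = t ^ β * u (1, t⁻¹ • x) := by
    rw [← h t ht (1, t⁻¹ • x) hx, Prod.smul_mk, smul_smul, mul_inv_cancel₀ ht.ne', one_smul,
      smul_eq_mul, mul_one]
  rw [hscale, abs_mul, abs_of_pos (Real.rpow_pos_of_pos ht β), mul_comm]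
  exact mul_le_mul_of_nonneg_right (hM _ hx) (Real.rpow_nonneg ht.le β)

end HomogeneousOnCone

section SliceBounds

def BddOnSlice (f : Spt → ℝ) : Prop :=
  ∃ M : ℝ, ∀ x : E3, ‖x‖ < 1 → |f (1, x)| ≤ M

variable {f g u v : Spt → ℝ}

theorem BddOnSlice.congr (hfg : EqOn f g forwardCone) (hg : BddOnSlice g) : BddOnSlice f := by
  obtain ⟨M, hM⟩ := hg
  exact ⟨M, fun x hx => (hfg (show ((1 : ℝ), x) ∈ forwardCone from hx)).symm ▸ hM x hx⟩

theorem BddOnSlice.add (hf : BddOnSlice f) (hg : BddOnSlice g) : BddOnSlice (f + g) := by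
  obtain ⟨M, hM⟩ := hf
  obtain ⟨N, hN⟩ := hg
  exact ⟨M + N, fun x hx => (abs_add_le _ _).trans (add_le_add (hM x hx) (hN x hx))⟩

theorem BddOnSlice.mul (hf : BddOnSlice f) (hg : BddOnSlice g) :
    BddOnSlice (fun p => f p * g p) := by
  obtain ⟨M, hM⟩ := hf
  obtain ⟨N, hN⟩ := hg
  refine ⟨M * N, fun x hx => ?_⟩
  rw [abs_mul]
  exact mul_le_mul (hM x hx) (hN x hx) (abs_nonneg _) ((abs_nonneg _).trans (hM 0 (by simp)))

theorem BddOnSlice.const_smul (c : ℝ) (hf : BddOnSlice f) : BddOnSlice (c • f) :=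
  (BddOnSlice.mul ⟨|c|, fun _ _ => le_rfl⟩ hf).congr fun _ _ => rfl

theorem bddOnSlice_clm (L : Spt →L[ℝ] ℝ) : BddOnSlice L := by
  refine ⟨‖L‖, fun x hx => ?_⟩
  have hnorm : ‖((1 : ℝ), x)‖ ≤ 1 := by
    rw [Prod.norm_def, norm_one]
    exact max_le le_rfl hx.le
  simpa using L.le_opNorm_of_le hnorm

def DerivBddOnSlice (u : Spt → ℝ) : Prop :=
  ∀ I : List (Fin 4), BddOnSlice (pdW I u)

theorem DerivBddOnSlice.pd (hu : DerivBddOnSlice u) (α : Fin 4) : DerivBddOnSlice (pd α u) :=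
  fun I => pdW_append I α u ▸ hu (I ++ [α])

theorem DerivBddOnSlice.add (hu : ContDiffOn ℝ ∞ u forwardCone)
    (hv : ContDiffOn ℝ ∞ v forwardCone) (hbu : DerivBddOnSlice u) (hbv : DerivBddOnSlice v) :
    DerivBddOnSlice (u + v) :=
  fun I => ((hbu I).add (hbv I)).congr (pdW_add I hu hv)

theorem DerivBddOnSlice.const_smul (c : ℝ) (hu : DerivBddOnSlice u) :
    DerivBddOnSlice (c • u) :=
  fun I => pdW_const_smul I c u ▸ (hu I).const_smul c

theorem DerivBddOnSlice.clm_mul (L : Spt →L[ℝ] ℝ) (hu : ContDiffOn ℝ ∞ u forwardCone)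
    (hbu : DerivBddOnSlice u) : DerivBddOnSlice (fun p => L p * u p) := by
  intro I
  -- Peel off the innermost derivative: `∂_α (L u) = L(e_α) u + L ∂_α u`, and `∂_α u` again
  -- satisfies the hypotheses, so induct on `I` from the right for all `u` at once.
  induction I using List.reverseRecOn generalizing u with
  | nil => exact (bddOnSlice_clm L).mul (hbu [])
  | append_singleton I α ih =>
    have hprod : ContDiffOn ℝ ∞ (fun p => L p * _root_.pd α u p) forwardCone :=
      L.contDiff.contDiffOn.mul (contDiffOn_pd α hu)
    rw [pdW_append]
    refine (((hbu.const_smul (L (pdDir α))) I).add (ih (contDiffOn_pd α hu) (hbu.pd α))).congr ?_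
    exact (pdW_congr (pd_clm_mul α L hu) I).trans (pdW_add I (contDiffOn_const.smul hu) hprod)

theorem lb_eq_clm_mul_add (a : Fin 3) (u : Spt → ℝ) :
    lb a u = (fun p => (EuclideanSpace.proj a ∘L ContinuousLinearMap.snd ℝ ℝ E3) p * pd 0 u p) +
      fun p => ContinuousLinearMap.fst ℝ ℝ E3 p * pd a.succ u p := by
  ext p
  simp [lb, pd_zero, pd_succ]

theorem contDiffOn_lb (a : Fin 3) (hu : ContDiffOn ℝ ∞ u forwardCone) :
    ContDiffOn ℝ ∞ (lb a u) forwardCone := by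
  rw [lb_eq_clm_mul_add]
  exact (ContinuousLinearMap.contDiff _).contDiffOn.mul (contDiffOn_pd 0 hu) |>.add <|
    (ContinuousLinearMap.contDiff _).contDiffOn.mul (contDiffOn_pd a.succ hu)

theorem contDiffOn_lbW (J : List (Fin 3)) (hu : ContDiffOn ℝ ∞ u forwardCone) :
    ContDiffOn ℝ ∞ (lbW J u) forwardCone := by
  induction J with
  | nil => exact hu
  | cons a J ih => exact contDiffOn_lb a ih

theorem DerivBddOnSlice.lb (a : Fin 3) (hu : ContDiffOn ℝ ∞ u forwardCone)
    (hbu : DerivBddOnSlice u) : DerivBddOnSlice (lb a u) := by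
  rw [lb_eq_clm_mul_add]
  exact DerivBddOnSlice.add
    ((ContinuousLinearMap.contDiff _).contDiffOn.mul (contDiffOn_pd 0 hu))
    ((ContinuousLinearMap.contDiff _).contDiffOn.mul (contDiffOn_pd a.succ hu))
    (.clm_mul _ (contDiffOn_pd 0 hu) (hbu.pd 0))
    (.clm_mul _ (contDiffOn_pd a.succ hu) (hbu.pd a.succ))

theorem DerivBddOnSlice.lbW (J : List (Fin 3)) (hu : ContDiffOn ℝ ∞ u forwardCone)
    (hbu : DerivBddOnSlice u) : DerivBddOnSlice (lbW J u) := by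
  induction J with
  | nil => exact hbu
  | cons a J ih => exact ih.lb a (contDiffOn_lbW J hu)

end SliceBounds

/-- Decay of derivatives of a smooth homogeneous function of degree `α` on `{|x| < t}`:
`|∂^I L^J Φ(t,x)| ≤ C t^{α − |I|}`. -/
theorem homogeneous_function_derivative_decay
    (α : ℝ) (Φ : Spt → ℝ)
    (hΦ : ContDiffOn ℝ (⊤ : ℕ∞) Φ {p : Spt | ‖p.2‖ < p.1})
    (hhom : ∀ l : ℝ, 0 < l → ∀ p : Spt, ‖p.2‖ < p.1 →
      Φ (l * p.1, l • p.2) = l ^ α * Φ p)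
    (hbd : ∀ I : List (Fin 4), ∃ M : ℝ, ∀ x : E3, ‖x‖ < 1 → |pdW I Φ (1, x)| ≤ M) :
    ∀ (I : List (Fin 4)) (J : List (Fin 3)), ∃ C : ℝ,
      ∀ p : Spt, ‖p.2‖ < p.1 →
        |pdW I (lbW J Φ) p| ≤ C * p.1 ^ (α - (I.length : ℝ)) := by
  intro I J
  have hhomΦ : IsHomogeneousOn forwardCone α Φ := hhom
  obtain ⟨C, hC⟩ := DerivBddOnSlice.lbW J hΦ hbd I
  exact ⟨C, fun p hp => ((hhomΦ.lbW J).pdW I).abs_le hC hp⟩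
end
end

section
/- There exists a constant C > 0 such that for all t > 0 and all x ∈ ℝ³, ∫_{S(x,t)} (1 + |y|)^{−1} dσ(y) ≤ C t, where S(x,t) = {y ∈ ℝ³ : |y − x| = t} and σ is the rotation-invariant surface measure on S(x,t), normalized so that σ(S(x,t)) = 4π t². -/
/-!
Thicken the sphere: `(1 + ‖y‖)⁻¹` changes by at most a factor `2` under a shift of length
`≤ 1`, so polar coordinates about `x` bound `t² δ ∫ (1 + ‖x + tω‖)⁻¹ dσ(ω)` by twice the
integral of `(1 + ‖z‖)⁻¹` over the shell `t ≤ ‖z - x‖ ≤ t + δ`, where `δ = min 1 t`.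
Rotate `x` onto the first axis and write `z = (u, w) ∈ ℝ × ℂ`. Since `(1 + ‖z‖)⁻¹ ≤ (1 + ‖w‖)⁻¹`,
polar coordinates in `w` produce the weight `r / (1 + r) ≤ 1`, which cancels the Jacobian `r`:
the shell integral is at most a constant times the area `π ((t + δ)² - t²) ≤ 3π t δ` of the
planar annulus swept out by `(u, ‖w‖)`.
-/

noncomputable section
open MeasureTheory

/-- Surface integral `∫_{S(x,R)} g dσ` over the sphere of center `x` and radius `R`,
with respect to the rotation-invariant surface measure of total mass `4πR²`:
`∫_{S(x,R)} g dσ = R² ∫_{S(0,1)} g(x + Rω) dσ₁(ω)`, where `σ₁` is the canonical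
surface measure on the unit sphere (of total mass `4π`). -/
def sphereIntegral (x : E3) (R : ℝ) (g : E3 → ℝ) : ℝ :=
  R ^ 2 * ∫ ω : Metric.sphere (0 : E3) 1, g (x + R • (ω : E3))
    ∂((volume : Measure E3).toSphere)

open Set Metric Real
open scoped ENNReal NNReal

section Polar

variable {E : Type*} [NormedAddCommGroup E] [NormedSpace ℝ E] [FiniteDimensional ℝ E]
  [Nontrivial E] [MeasurableSpace E] [BorelSpace E] (μ : Measure E) [μ.IsAddHaarMeasure]

theorem lintegral_eq_lintegral_toSphere_lintegral_Ioi {G : E → ℝ≥0∞} (hG : Measurable G) :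
    ∫⁻ y, G y ∂μ = ∫⁻ ω : sphere (0 : E) 1, (∫⁻ r in Ioi (0 : ℝ),
      ENNReal.ofReal (r ^ (Module.finrank ℝ E - 1)) * G (r • (ω : E))) ∂μ.toSphere := by
  have hGm : Measurable fun p : sphere (0 : E) 1 × Ioi (0 : ℝ) => G (p.2.1 • (p.1 : E)) :=
    hG.comp ((measurable_subtype_coe.comp measurable_snd).smul
      (measurable_subtype_coe.comp measurable_fst))
  have hpolar := μ.measurePreserving_homeomorphUnitSphereProd.lintegral_comp hGm
  have hsmul : ∀ z : ({0}ᶜ : Set E), G ((homeomorphUnitSphereProd E z).2.1 •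
      ((homeomorphUnitSphereProd E z).1 : E)) = G z := fun z => by
    simp [smul_inv_smul₀ (norm_ne_zero_iff.2 z.2)]
  rw [lintegral_congr hsmul, lintegral_subtype_comap (measurableSet_singleton 0).compl,
    restrict_compl_singleton] at hpolar
  rw [hpolar, lintegral_prod _ hGm.aemeasurable]
  refine lintegral_congr fun ω => ?_
  rw [Measure.volumeIoiPow, lintegral_withDensity_eq_lintegral_mul _ (by fun_prop) (by fun_prop),
    ← lintegral_subtype_comap measurableSet_Ioi]
  rfl

theorem lintegral_fun_norm_addHaar {g : ℝ → ℝ≥0∞} (hg : Measurable g) :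
    ∫⁻ y, g ‖y‖ ∂μ = μ.toSphere univ *
      ∫⁻ r in Ioi (0 : ℝ), ENNReal.ofReal (r ^ (Module.finrank ℝ E - 1)) * g r := by
  rw [lintegral_eq_lintegral_toSphere_lintegral_Ioi μ (G := fun y => g ‖y‖)
    (hg.comp measurable_norm), mul_comm, ← lintegral_const]
  refine lintegral_congr fun ω => setLIntegral_congr_fun measurableSet_Ioi fun r (hr : 0 < r) => ?_
  simp [norm_smul, abs_of_pos hr]

theorem lintegral_toSphere_le_setLIntegral_shell {G : E → ℝ≥0∞} (hG : Measurable G) (x : E)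
    {t δ : ℝ} (ht : 0 < t) {c : ℝ≥0}
    (hc : ∀ ω : sphere (0 : E) 1, ∀ r ∈ Icc t (t + δ), G (x + t • (ω : E)) ≤ c * G (x + r • ω)) :
    ENNReal.ofReal (t ^ (Module.finrank ℝ E - 1) * δ) * ∫⁻ ω, G (x + t • (ω : E)) ∂μ.toSphere ≤
      c * ∫⁻ z in closedBall x (t + δ) \ ball x t, G z ∂μ := by
  set n := Module.finrank ℝ E - 1
  set A := closedBall x (t + δ) \ ball x t
  have hA : MeasurableSet A := measurableSet_closedBall.diff measurableSet_ball
  have hmem : ∀ ω : sphere (0 : E) 1, ∀ r ∈ Icc t (t + δ), x + r • (ω : E) ∈ A := by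
    intro ω r hr
    have : dist (x + r • (ω : E)) x = r := by simp [norm_smul, abs_of_pos (ht.trans_le hr.1)]
    simp [A, this, hr.2, hr.1]
  have hray : ∀ ω : sphere (0 : E) 1,
      ENNReal.ofReal (t ^ n * δ) * G (x + t • (ω : E)) ≤
        c * ∫⁻ r in Ioi (0 : ℝ), ENNReal.ofReal (r ^ n) * A.indicator G (x + r • (ω : E)) := by
    intro ω
    calc ENNReal.ofReal (t ^ n * δ) * G (x + t • (ω : E))
        = ∫⁻ _ in Icc t (t + δ), ENNReal.ofReal (t ^ n) * G (x + t • (ω : E)) := by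
          rw [setLIntegral_const, Real.volume_Icc, add_sub_cancel_left,
            ENNReal.ofReal_mul (by positivity)]
          ring
      _ ≤ ∫⁻ r in Icc t (t + δ),
            c * (ENNReal.ofReal (r ^ n) * A.indicator G (x + r • (ω : E))) := by
          refine setLIntegral_mono' measurableSet_Icc fun r hr => ?_
          rw [indicator_of_mem (hmem ω r hr), mul_left_comm]
          gcongr
          · exact hr.1
          · exact hc ω r hr
      _ ≤ c * ∫⁻ r in Ioi (0 : ℝ), ENNReal.ofReal (r ^ n) * A.indicator G (x + r • (ω : E)) := by
          rw [lintegral_const_mul' _ _ ENNReal.coe_ne_top]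
          gcongr
          exact fun r hr => ht.trans_le hr.1
  calc ENNReal.ofReal (t ^ n * δ) * ∫⁻ ω, G (x + t • (ω : E)) ∂μ.toSphere
      ≤ ∫⁻ ω, c * (∫⁻ r in Ioi (0 : ℝ), ENNReal.ofReal (r ^ n) * A.indicator G (x + r • (ω : E)))
          ∂μ.toSphere := by
        rw [← lintegral_const_mul' _ _ ENNReal.ofReal_ne_top]
        exact lintegral_mono hray
    _ = c * ∫⁻ y, A.indicator G (x + y) ∂μ := by
        rw [lintegral_const_mul' _ _ ENNReal.coe_ne_top,
          lintegral_eq_lintegral_toSphere_lintegral_Ioi μ (G := fun y => A.indicator G (x + y))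
            ((hG.indicator hA).comp (measurable_const_add x))]
    _ = c * ∫⁻ z in A, G z ∂μ := by
        rw [lintegral_add_left_eq_self (A.indicator G) x, lintegral_indicator hA]

end Polar

theorem inv_one_add_norm_le_two_mul_inv_one_add_norm_add {F : Type*} [SeminormedAddCommGroup F]
    (y : F) {v : F} (hv : ‖v‖ ≤ 1) : (1 + ‖y‖)⁻¹ ≤ 2 * (1 + ‖y + v‖)⁻¹ := by
  have : 1 + ‖y + v‖ ≤ 2 * (1 + ‖y‖) := by linarith [norm_add_le y v, norm_nonneg y]
  rw [← div_eq_mul_inv, le_div_iff₀ (by positivity), inv_mul_le_iff₀ (by positivity)]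
  linarith

section Rotation

variable {F : Type*} [NormedAddCommGroup F] [InnerProductSpace ℝ F] [FiniteDimensional ℝ F]
  [MeasurableSpace F] [BorelSpace F]

theorem setLIntegral_shell_fun_norm_eq_of_norm_eq {x y : F} (hxy : ‖x‖ = ‖y‖) (g : ℝ → ℝ≥0∞)
    (t T : ℝ) :
    ∫⁻ z in closedBall x T \ ball x t, g ‖z‖ = ∫⁻ z in closedBall y T \ ball y t, g ‖z‖ := by
  set R := (ℝ ∙ (y - x))ᗮ.reflection
  have hRy : R y = x := Submodule.reflection_sub hxy.symm
  have hpre : R ⁻¹' (closedBall x T \ ball x t) = closedBall y T \ ball y t := by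
    rw [preimage_sdiff, ← hRy, R.isometry.preimage_closedBall, R.isometry.preimage_ball]
  rw [← hpre, ← R.measurePreserving.setLIntegral_comp_preimage_emb
    R.toHomeomorph.measurableEmbedding]
  simp

end Rotation

theorem lintegral_real_prod_complex_inv_one_add_norm_le {g : ℝ × ℝ → ℝ≥0∞} (hg : Measurable g) :
    ∫⁻ p : ℝ × ℂ, g (p.1, ‖p.2‖) * ENNReal.ofReal (1 + ‖p.2‖)⁻¹ ≤
      (volume : Measure ℂ).toSphere univ * ∫⁻ q, g q := by
  have hweight : ∀ u r : ℝ, 0 < r →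
      ENNReal.ofReal r * (g (u, r) * ENNReal.ofReal (1 + r)⁻¹) ≤ g (u, r) := by
    intro u r hr
    rw [mul_left_comm, ← ENNReal.ofReal_mul hr.le, ← div_eq_mul_inv]
    refine mul_le_of_le_one_right' (ENNReal.ofReal_le_one.2 ?_)
    rw [div_le_one (by positivity)]
    linarith
  rw [Measure.volume_eq_prod, lintegral_prod _ (by fun_prop), Measure.volume_eq_prod,
    lintegral_prod _ hg.aemeasurable, ← lintegral_const_mul _ (by fun_prop)]
  refine lintegral_mono fun u => ?_
  rw [lintegral_fun_norm_addHaar volume (g := fun r => g (u, r) * ENNReal.ofReal (1 + r)⁻¹)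
    (by fun_prop)]
  simp only [Complex.finrank_real_complex, Nat.reduceSub, pow_one]
  refine mul_le_mul_right ?_ _
  calc ∫⁻ r in Ioi (0 : ℝ), ENNReal.ofReal r * (g (u, r) * ENNReal.ofReal (1 + r)⁻¹)
      ≤ ∫⁻ r in Ioi (0 : ℝ), g (u, r) := setLIntegral_mono' measurableSet_Ioi (hweight u)
    _ ≤ ∫⁻ r, g (u, r) := setLIntegral_le_lintegral _ _

theorem Complex.volume_closedBall_sdiff_ball (a : ℂ) {t T : ℝ} (ht : 0 ≤ t) (htT : t ≤ T) :
    volume (closedBall a T \ ball a t) = ENNReal.ofReal (π * (T ^ 2 - t ^ 2)) := by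
  have hball (r : ℝ) (hr : 0 ≤ r) :
      ENNReal.ofReal r ^ 2 * NNReal.pi = ENNReal.ofReal (π * r ^ 2) := by
    rw [← ENNReal.ofReal_pow hr, ← ENNReal.ofReal_coe_nnreal, NNReal.coe_real_pi,
      ← ENNReal.ofReal_mul (by positivity), mul_comm]
  rw [measure_sdiff (ball_subset_closedBall.trans (closedBall_subset_closedBall htT))
    measurableSet_ball.nullMeasurableSet measure_ball_lt_top.ne, Complex.volume_closedBall,
    Complex.volume_ball, hball T (ht.trans htT), hball t ht, mul_sub,
    ENNReal.ofReal_sub _ (by positivity)]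

def toRealProdComplex (z : E3) : ℝ × ℂ := (z 0, ⟨z 1, z 2⟩)

theorem measurePreserving_toRealProdComplex : MeasurePreserving toRealProdComplex := by
  have hplane : MeasurePreserving
      (Prod.map id (Complex.measurableEquivRealProd.symm ∘ MeasurableEquiv.finTwoArrow))
      (volume : Measure (ℝ × (Fin 2 → ℝ))) (volume : Measure (ℝ × ℂ)) :=
    (MeasurePreserving.id volume).prod
      (Complex.volume_preserving_equiv_real_prod.symm.comp (volume_preserving_finTwoArrow ℝ))
  exact (hplane.comp (volume_preserving_piFinSuccAbove (fun _ : Fin 3 => ℝ) 0)).comp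
    (EuclideanSpace.volume_preserving_symm_measurableEquiv_toLp (Fin 3))

theorem norm_sub_smul_single_zero_sq (z : E3) (a : ℝ) :
    ‖z - a • EuclideanSpace.single 0 1‖ ^ 2 =
      ((toRealProdComplex z).1 - a) ^ 2 + ‖(toRealProdComplex z).2‖ ^ 2 := by
  rw [EuclideanSpace.norm_sq_eq, Fin.sum_univ_three, Complex.sq_norm, Complex.normSq_mk]
  simp [toRealProdComplex, sq]
  ring

theorem setLIntegral_shell_inv_one_add_norm_le (x : E3) {t T : ℝ} (ht : 0 ≤ t) (htT : t ≤ T) :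
    ∫⁻ z in closedBall x T \ ball x t, ENNReal.ofReal (1 + ‖z‖)⁻¹ ≤
      (volume : Measure ℂ).toSphere univ * ENNReal.ofReal (π * (T ^ 2 - t ^ 2)) := by
  set y : E3 := ‖x‖ • EuclideanSpace.single 0 1
  set S : Set ℂ := closedBall (‖x‖ : ℂ) T \ ball (‖x‖ : ℂ) t
  have hS : MeasurableSet S := measurableSet_closedBall.diff measurableSet_ball
  set g : ℝ × ℝ → ℝ≥0∞ := fun q => S.indicator 1 (Complex.measurableEquivRealProd.symm q)
  have hg : Measurable g := (measurable_one.indicator hS).comp (MeasurableEquiv.measurable _)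
  set G : ℝ × ℂ → ℝ≥0∞ := fun p => g (p.1, ‖p.2‖) * ENNReal.ofReal (1 + ‖p.2‖)⁻¹
  have hG : Measurable G := (hg.comp (measurable_fst.prodMk measurable_snd.norm)).mul
    (measurable_snd.norm.const_add 1).inv.ennreal_ofReal
  have hpt : ∀ z : E3, (closedBall y T \ ball y t).indicator
      (fun z => ENNReal.ofReal (1 + ‖z‖)⁻¹) z ≤ G (toRealProdComplex z) := by
    intro z
    have hy := norm_sub_smul_single_zero_sq z ‖x‖
    have h0 := norm_sub_smul_single_zero_sq z 0
    rw [zero_smul, sub_zero, sub_zero] at h0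
    generalize toRealProdComplex z = p at hy h0
    obtain ⟨u, w⟩ := p
    by_cases hz : z ∈ closedBall y T \ ball y t
    · have hdist : dist (Complex.measurableEquivRealProd.symm (u, ‖w‖)) ‖x‖ = dist z y := by
        rw [dist_eq_norm, dist_eq_norm, ← pow_left_inj₀ (norm_nonneg _) (norm_nonneg _) two_ne_zero,
          hy, Complex.sq_norm, Complex.normSq_apply]
        simp [sq]
      have hzS : Complex.measurableEquivRealProd.symm (u, ‖w‖) ∈ S := by
        rwa [mem_sdiff, mem_closedBall, mem_ball, hdist]
      have hw : ‖w‖ ≤ ‖z‖ := by nlinarith [norm_nonneg z, norm_nonneg w, sq_nonneg u]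
      simp only [G, g, indicator_of_mem hz, indicator_of_mem hzS, Pi.one_apply, one_mul]
      gcongr
    · rw [indicator_of_notMem hz]
      exact zero_le
  calc ∫⁻ z in closedBall x T \ ball x t, ENNReal.ofReal (1 + ‖z‖)⁻¹
      = ∫⁻ z in closedBall y T \ ball y t, ENNReal.ofReal (1 + ‖z‖)⁻¹ :=
        setLIntegral_shell_fun_norm_eq_of_norm_eq (y := y) (by simp [y, norm_smul])
          (fun r => ENNReal.ofReal (1 + r)⁻¹) t T
    _ ≤ ∫⁻ z, G (toRealProdComplex z) := by
        rw [← lintegral_indicator (measurableSet_closedBall.diff measurableSet_ball)]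
        exact lintegral_mono hpt
    _ = ∫⁻ p, G p := measurePreserving_toRealProdComplex.lintegral_comp hG
    _ ≤ (volume : Measure ℂ).toSphere univ * ∫⁻ q, g q :=
        lintegral_real_prod_complex_inv_one_add_norm_le hg
    _ = (volume : Measure ℂ).toSphere univ * ENNReal.ofReal (π * (T ^ 2 - t ^ 2)) := by
        rw [Complex.volume_preserving_equiv_real_prod.symm.lintegral_comp
          (measurable_one.indicator hS), lintegral_indicator_one hS,
          Complex.volume_closedBall_sdiff_ball _ ht htT]

theorem lintegral_toSphere_inv_one_add_norm_le (x : E3) {t : ℝ} (ht : 0 < t) :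
    ENNReal.ofReal (t ^ 2) * ∫⁻ ω, ENNReal.ofReal (1 + ‖x + t • (ω : E3)‖)⁻¹
        ∂(volume : Measure E3).toSphere ≤
      ENNReal.ofReal (6 * π * t) * (volume : Measure ℂ).toSphere univ := by
  set δ := min 1 t
  have hδ : 0 < δ := lt_min one_pos ht
  have hδt : δ ≤ t := min_le_right 1 t
  have hratio : ∀ ω : sphere (0 : E3) 1, ∀ r ∈ Icc t (t + δ),
      ENNReal.ofReal (1 + ‖x + t • (ω : E3)‖)⁻¹ ≤
        ((2 : ℝ≥0) : ℝ≥0∞) * ENNReal.ofReal (1 + ‖x + r • (ω : E3)‖)⁻¹ := by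
    intro ω r hr
    have hshift : x + r • (ω : E3) = x + t • (ω : E3) + (r - t) • (ω : E3) := by
      rw [sub_smul]; abel
    have hv : ‖(r - t) • (ω : E3)‖ ≤ 1 := by
      rw [norm_smul, norm_eq_of_mem_sphere ω, mul_one, Real.norm_of_nonneg (by linarith [hr.1])]
      linarith [hr.2, min_le_left 1 t]
    refine (ENNReal.ofReal_le_ofReal
      (inv_one_add_norm_le_two_mul_inv_one_add_norm_add _ hv)).trans_eq ?_
    rw [hshift, ENNReal.ofReal_mul zero_le_two, ENNReal.ofReal_ofNat, ENNReal.coe_ofNat]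
  refine (ENNReal.mul_le_mul_iff_right (ENNReal.ofReal_pos.2 hδ).ne' ENNReal.ofReal_ne_top).1 ?_
  calc ENNReal.ofReal δ * (ENNReal.ofReal (t ^ 2) *
        ∫⁻ ω, ENNReal.ofReal (1 + ‖x + t • (ω : E3)‖)⁻¹ ∂(volume : Measure E3).toSphere)
      = ENNReal.ofReal (t ^ (Module.finrank ℝ E3 - 1) * δ) *
        ∫⁻ ω, ENNReal.ofReal (1 + ‖x + t • (ω : E3)‖)⁻¹ ∂(volume : Measure E3).toSphere := by
        rw [finrank_euclideanSpace_fin, ENNReal.ofReal_mul (by positivity)]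
        ring
    _ ≤ 2 * ∫⁻ z in closedBall x (t + δ) \ ball x t, ENNReal.ofReal (1 + ‖z‖)⁻¹ := by
        exact_mod_cast lintegral_toSphere_le_setLIntegral_shell volume
          (G := fun z : E3 => ENNReal.ofReal (1 + ‖z‖)⁻¹) (by fun_prop) x ht hratio
    _ ≤ 2 * ((volume : Measure ℂ).toSphere univ * ENNReal.ofReal (π * ((t + δ) ^ 2 - t ^ 2))) := by
        gcongr
        exact setLIntegral_shell_inv_one_add_norm_le x ht.le (by linarith)
    _ = ENNReal.ofReal (2 * (π * ((t + δ) ^ 2 - t ^ 2))) * (volume : Measure ℂ).toSphere univ := by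
        rw [ENNReal.ofReal_mul zero_le_two, ENNReal.ofReal_ofNat]
        ring
    _ ≤ ENNReal.ofReal (δ * (6 * π * t)) * (volume : Measure ℂ).toSphere univ := by
        gcongr ?_ * _
        exact ENNReal.ofReal_le_ofReal
          (by nlinarith [mul_le_mul_of_nonneg_left hδt (mul_nonneg pi_pos.le hδ.le)])
    _ = ENNReal.ofReal δ * (ENNReal.ofReal (6 * π * t) * (volume : Measure ℂ).toSphere univ) := by
        rw [ENNReal.ofReal_mul hδ.le]
        ring

/-- `∫_{S(x,t)} (1 + |y|)⁻¹ dσ(y) ≤ C t` uniformly in `t > 0` and `x ∈ ℝ³`. -/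
theorem sphere_integral_decay_estimate :
    ∃ C > (0 : ℝ), ∀ t : ℝ, 0 < t → ∀ x : E3,
      sphereIntegral x t (fun y => (1 + ‖y‖)⁻¹) ≤ C * t := by
  have hσ : 0 < (volume : Measure ℂ).toSphere.real univ := by simp [Measure.real, pi_pos]
  refine ⟨6 * π * (volume : Measure ℂ).toSphere.real univ, by positivity, fun t ht x => ?_⟩
  have hcont : Continuous fun ω : sphere (0 : E3) 1 => (1 + ‖x + t • (ω : E3)‖)⁻¹ :=
    Continuous.inv₀ (by fun_prop) fun ω => by positivity
  have hreal := ENNReal.toReal_mono (by finiteness) (lintegral_toSphere_inv_one_add_norm_le x ht)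
  rw [ENNReal.toReal_mul, ENNReal.toReal_mul, ENNReal.toReal_ofReal (sq_nonneg t),
    ENNReal.toReal_ofReal (by positivity), ← integral_eq_lintegral_of_nonneg_ae
      (.of_forall fun ω => by positivity) hcont.aestronglyMeasurable] at hreal
  rw [sphereIntegral]
  simpa [Measure.real, mul_right_comm] using hreal
end
end
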